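/- arXiv:2301.12849 — 9 statements merged into one kernel-verified Lean document; each statement's English description precedes it below -/
import Mathlib

section
/- Let p be a prime and let G be a finite p-group of exponent p². Then either G has exactly one cyclic subgroup of order p², or G contains two distinct cyclic subgroups M and N of order p² such that |M ∩ N| = p. -/
open Subgroup

private lemma zpowers_isCyclic' {G : Type*} [Group G] [Finite G] (a : G) :
    IsCyclic (Subgroup.zpowers a) := by
  apply isCyclic_of_orderOf_eq_card (⟨a, Subgroup.mem_zpowers a⟩ : Subgroup.zpowers a)
  rw [Subgroup.orderOf_mk, Nat.card_zpowers]

private lemma aux_card_inf {p : ℕ} (hp : p.Prime) {G : Type*} [Group G] [Finite G]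
    {M N : Subgroup G} (hMN : M ≠ N) (hM : Nat.card M = p ^ 2) (hN : Nat.card N = p ^ 2)
    {x : G} (hxM : x ∈ M) (hxN : x ∈ N) (hx : orderOf x = p) :
    Nat.card (M ⊓ N : Subgroup G) = p := by
  have hdvd : Nat.card (M ⊓ N : Subgroup G) ∣ p ^ 2 := hM ▸ Subgroup.card_dvd_of_le inf_le_left
  have hpd : p ∣ Nat.card (M ⊓ N : Subgroup G) := by
    have hmem : x ∈ M ⊓ N := ⟨hxM, hxN⟩
    have : orderOf (⟨x, hmem⟩ : (M ⊓ N : Subgroup G)) = p := by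
      rw [Subgroup.orderOf_mk, hx]
    exact this ▸ orderOf_dvd_natCard _
  have hne : Nat.card (M ⊓ N : Subgroup G) ≠ p ^ 2 := by
    intro h
    have h1 : M ⊓ N = M := Subgroup.eq_of_le_of_card_ge inf_le_left (by rw [hM, h])
    have h2 : M ⊓ N = N := Subgroup.eq_of_le_of_card_ge inf_le_right (by rw [hN, h])
    exact hMN (h1 ▸ h2)
  obtain ⟨k, hk2, hkeq⟩ := (Nat.dvd_prime_pow hp).mp hdvd
  interval_cases k
  · rw [hkeq, pow_zero] at hpd
    exact absurd (Nat.le_of_dvd one_pos hpd) (not_le.mpr hp.one_lt)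
  · simpa using hkeq
  · exact absurd hkeq hne

private lemma aux_pair {p : ℕ} (hp : p.Prime) {G : Type*} [Group G] [Finite G]
    {a z : G} (ha : orderOf a = p ^ 2) (hz : orderOf z = p)
    (hzc : z ∈ Subgroup.center G) (hza : z ∉ Subgroup.zpowers a) :
    ∃ M N : Subgroup G, M ≠ N ∧ IsCyclic M ∧ IsCyclic N ∧
      Nat.card M = p ^ 2 ∧ Nat.card N = p ^ 2 ∧
      Nat.card (M ⊓ N : Subgroup G) = p := by
  have hcomm : Commute a z := (Subgroup.mem_center_iff.mp hzc) a
  have hap : a ^ p ≠ 1 := by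
    intro h
    have := orderOf_dvd_of_pow_eq_one h
    rw [ha] at this
    exact absurd (Nat.le_of_dvd hp.pos this)
      (not_le.mpr (by nlinarith [hp.one_lt]))
  have h2 : (a * z) ^ p = a ^ p := by
    rw [hcomm.mul_pow, ← hz, pow_orderOf_eq_one, mul_one]
  have h1 : (a * z) ^ (p ^ 2) = 1 := by
    have hz2 : z ^ p ^ 2 = 1 := by rw [sq, pow_mul, ← hz, pow_orderOf_eq_one, one_pow]
    have ha2 : a ^ p ^ 2 = 1 := by rw [← ha, pow_orderOf_eq_one]
    rw [hcomm.mul_pow, ha2, hz2, one_mul]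
  have haz : orderOf (a * z) = p ^ 2 := by
    obtain ⟨k, hk2, hkeq⟩ := (Nat.dvd_prime_pow hp).mp (orderOf_dvd_of_pow_eq_one h1)
    interval_cases k
    · rw [pow_zero, orderOf_eq_one_iff] at hkeq
      exact absurd (by rw [← h2, hkeq, one_pow]) hap
    · rw [pow_one] at hkeq
      have : (a * z) ^ p = 1 := hkeq ▸ pow_orderOf_eq_one _
      exact absurd (h2 ▸ this) hap
    · exact hkeq
  refine ⟨Subgroup.zpowers a, Subgroup.zpowers (a * z), ?_, zpowers_isCyclic' a,
    zpowers_isCyclic' (a * z), by rw [Nat.card_zpowers, ha], by rw [Nat.card_zpowers, haz], ?_⟩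
  · intro h
    apply hza
    have : a * z ∈ Subgroup.zpowers a := h ▸ Subgroup.mem_zpowers (a * z)
    have := (Subgroup.zpowers a).mul_mem (Subgroup.inv_mem _ (Subgroup.mem_zpowers a)) this
    rwa [inv_mul_cancel_left] at this
  · refine aux_card_inf hp ?_ (by rw [Nat.card_zpowers, ha]) (by rw [Nat.card_zpowers, haz])
      (x := a ^ p) (Subgroup.pow_mem _ (Subgroup.mem_zpowers a) p)
      (h2 ▸ Subgroup.pow_mem _ (Subgroup.mem_zpowers (a * z)) p) ?_
    · intro h
      apply hza
      have : a * z ∈ Subgroup.zpowers a := h ▸ Subgroup.mem_zpowers (a * z)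
      have := (Subgroup.zpowers a).mul_mem (Subgroup.inv_mem _ (Subgroup.mem_zpowers a)) this
      rwa [inv_mul_cancel_left] at this
    · have hg : Nat.gcd (p * p) p = p := Nat.gcd_eq_right (dvd_mul_left p p)
      rw [orderOf_pow, ha, sq, hg]; exact Nat.mul_div_cancel p hp.pos

/-- Let p be a prime and let G be a finite p-group of exponent p².
Then either G has exactly one cyclic subgroup of order p², or G contains two
distinct cyclic subgroups M and N of order p² such that |M ∩ N| = p. -/
theorem pGroup_exp_sq_cyclic_subgroups (p : ℕ) (hp : p.Prime)
    {G : Type*} [Group G] [Finite G] (hG : IsPGroup p G)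
    (hexp : Monoid.exponent G = p ^ 2) :
    (∃! H : Subgroup G, IsCyclic H ∧ Nat.card H = p ^ 2) ∨
      ∃ M N : Subgroup G, M ≠ N ∧ IsCyclic M ∧ IsCyclic N ∧
        Nat.card M = p ^ 2 ∧ Nat.card N = p ^ 2 ∧
        Nat.card (M ⊓ N : Subgroup G) = p := by
  have : Fact p.Prime := ⟨hp⟩
  have hnt : Nontrivial G := by
    by_contra h
    rw [not_nontrivial_iff_subsingleton] at h
    have h1 : Monoid.exponent G ∣ 1 :=
      Monoid.exponent_dvd_of_forall_pow_eq_one fun g => Subsingleton.elim _ _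
    rw [hexp, Nat.dvd_one] at h1
    nlinarith [hp.one_lt]
  obtain ⟨a, ha⟩ : ∃ a : G, orderOf a = p ^ 2 := by
    have hnd : ¬ Monoid.exponent G ∣ p := by
      rw [hexp]; intro h
      have := Nat.le_of_dvd hp.pos h; nlinarith [hp.one_lt]
    rw [Monoid.exponent_dvd_iff_forall_pow_eq_one, not_forall] at hnd
    obtain ⟨g, hg⟩ := hnd
    have hdvd : orderOf g ∣ p ^ 2 := hexp ▸ Monoid.order_dvd_exponent g
    obtain ⟨k, hk2, hkeq⟩ := (Nat.dvd_prime_pow hp).mp hdvd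
    interval_cases k
    · rw [pow_zero, orderOf_eq_one_iff] at hkeq
      exact absurd (by rw [hkeq, one_pow]) hg
    · rw [pow_one] at hkeq
      exact absurd (hkeq ▸ pow_orderOf_eq_one g) hg
    · exact ⟨g, hkeq⟩
  have hZ : IsPGroup p (Subgroup.center G) := hG.to_subgroup _
  have hZnt : Nontrivial (Subgroup.center G) := hG.center_nontrivial
  obtain ⟨n, hn0, hncard⟩ := hZ.nontrivial_iff_card.mp hZnt
  obtain ⟨z0, hz0⟩ := exists_prime_orderOf_dvd_card' (G := Subgroup.center G) p
    (hncard ▸ dvd_pow_self p hn0.ne')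
  have hz : orderOf (z0 : G) = p := (Subgroup.orderOf_coe z0).trans hz0
  have hzc : (z0 : G) ∈ Subgroup.center G := z0.2
  set M := Subgroup.zpowers a with hMdef
  have hMcyc := zpowers_isCyclic' a
  have hMcard : Nat.card M = p ^ 2 := by rw [hMdef, Nat.card_zpowers, ha]
  by_cases huniq : ∀ H : Subgroup G, IsCyclic H ∧ Nat.card H = p ^ 2 → H = M
  · exact Or.inl ⟨M, ⟨hMcyc, hMcard⟩, huniq⟩
  · right
    push_neg at huniq
    obtain ⟨N, ⟨hNcyc, hNcard⟩, hNM⟩ := huniq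
    by_cases hza : (z0 : G) ∈ M
    · by_cases hzN : (z0 : G) ∈ N
      · exact ⟨M, N, Ne.symm hNM, hMcyc, hNcyc, hMcard, hNcard,
          aux_card_inf hp (Ne.symm hNM) hMcard hNcard hza hzN hz⟩
      · obtain ⟨g, hg⟩ := hNcyc.exists_generator
        have hbord : orderOf ((g : N) : G) = p ^ 2 := by
          rw [Subgroup.orderOf_coe, orderOf_eq_card_of_forall_mem_zpowers hg, hNcard]
        have hNz : N = Subgroup.zpowers ((g : N) : G) := by
          refine (Subgroup.eq_of_le_of_card_ge (Subgroup.zpowers_le.mpr g.2) ?_).symm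
          rw [hNcard, Nat.card_zpowers, hbord]
        exact aux_pair hp hbord hz hzc (hNz ▸ hzN)
    · exact aux_pair hp ha hz hzc hza
end

section
/- Let G be a finite 2-group of exponent 4 that contains exactly one cyclic subgroup of order 4. Then G is isomorphic to the cyclic group Z₄ or to the dihedral group D₈ of order 8. -/
/-- Let G be a finite 2-group of exponent 4 that contains exactly one
cyclic subgroup of order 4. Then G is isomorphic to the cyclic group Z₄ or to the
dihedral group D₈ of order 8. -/
theorem twoGroup_exp_four_unique_cyclic (G : Type*) [Group G] [Finite G]
    (hG : IsPGroup 2 G) (hexp : Monoid.exponent G = 4)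
    (huniq : ∃! H : Subgroup G, IsCyclic H ∧ Nat.card H = 4) :
    Nonempty (G ≃* Multiplicative (ZMod 4)) ∨ Nonempty (G ≃* DihedralGroup 4) := by
  -- obtain x of order 4
  obtain ⟨x, hx2⟩ : ∃ x : G, x ^ 2 ≠ 1 := by
    by_contra h
    push_neg at h
    have h2 := Monoid.exponent_dvd_of_forall_pow_eq_one h
    rw [hexp] at h2
    norm_num at h2
  have hdvd : orderOf x ∣ 4 := hexp ▸ Monoid.order_dvd_exponent x
  have hx4 : orderOf x = 4 := by
    have hnd2 : ¬ orderOf x ∣ 2 := fun h => hx2 (orderOf_dvd_iff_pow_eq_one.mp h)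
    have hle := Nat.le_of_dvd (by norm_num) hdvd
    have hpos := orderOf_pos x
    interval_cases h : orderOf x <;> omega
  -- every subgroup generated by an order-4 element equals zpowers x
  have hzcyc : ∀ z : G, IsCyclic (Subgroup.zpowers z) := by
    intro z
    refine ⟨⟨⟨z, Subgroup.mem_zpowers z⟩, ?_⟩⟩
    rintro ⟨g, k, hk⟩
    exact ⟨k, Subtype.ext (by simpa using hk)⟩
  obtain ⟨K, -, hKu⟩ := huniq
  have hmem : ∀ z : G, orderOf z = 4 → z ∈ Subgroup.zpowers x := by
    intro z hz
    have h1 : Subgroup.zpowers z = K :=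
      hKu _ ⟨hzcyc z, by rw [Nat.card_zpowers, hz]⟩
    have h2 : Subgroup.zpowers x = K :=
      hKu _ ⟨hzcyc x, by rw [Nat.card_zpowers, hx4]⟩
    rw [h2, ← h1]
    exact Subgroup.mem_zpowers z
  -- elements outside H square to 1
  have hsq : ∀ z : G, z ∉ Subgroup.zpowers x → z * z = 1 := by
    intro z hz
    have hdz : orderOf z ∣ 4 := hexp ▸ Monoid.order_dvd_exponent z
    have hne : orderOf z ≠ 4 := fun h => hz (hmem z h)
    have h2 : orderOf z ∣ 2 := by
      have hle := Nat.le_of_dvd (by norm_num) hdz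
      have hpos := orderOf_pos z
      interval_cases hoz : orderOf z <;> omega
    have := orderOf_dvd_iff_pow_eq_one.mp h2
    rwa [pow_two] at this
  -- power arithmetic lemma
  have hpow : ∀ i j : ZMod 4, x ^ (i + j).val = x ^ i.val * x ^ j.val := by
    intro i j
    have h := pow_mod_orderOf x (i.val + j.val)
    rw [hx4] at h
    rw [ZMod.val_add, h, pow_add]
  have hinjpow : ∀ i j : ZMod 4, x ^ i.val = x ^ j.val → i = j := by
    intro i j h
    rw [pow_eq_pow_iff_modEq, hx4] at h
    have := h.eq_of_lt_of_lt (ZMod.val_lt i) (ZMod.val_lt j)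
    exact ZMod.val_injective 4 this
  have hnatpow : ∀ n : ℕ, x ^ ((n : ZMod 4)).val = x ^ n := by
    intro n
    have h := pow_mod_orderOf x n
    rw [hx4] at h
    rw [ZMod.val_natCast, h]
  by_cases hall : ∀ g : G, g ∈ Subgroup.zpowers x
  · -- cyclic case
    left
    let φ : Multiplicative (ZMod 4) →* G :=
      MonoidHom.mk' (fun i => x ^ (Multiplicative.toAdd i).val) (fun a b => hpow _ _)
    have hinj : Function.Injective φ := by
      intro a b h
      exact Multiplicative.toAdd.injective (hinjpow _ _ h)
    have hsurj : Function.Surjective φ := by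
      intro g
      obtain ⟨n, hn⟩ := (mem_powers_iff_mem_zpowers).mpr (hall g)
      refine ⟨Multiplicative.ofAdd (n : ZMod 4), ?_⟩
      show x ^ ((n : ZMod 4)).val = g
      rw [hnatpow n]; exact hn
    exact ⟨(MulEquiv.ofBijective φ ⟨hinj, hsurj⟩).symm⟩
  · -- dihedral case
    right
    push_neg at hall
    obtain ⟨y, hy⟩ := hall
    have hy2 : y * y = 1 := hsq y hy
    have hyinv : y⁻¹ = y := inv_eq_of_mul_eq_one_right hy2
    have hconj : ∀ z : G, z ∉ Subgroup.zpowers x → z * x * z⁻¹ = x⁻¹ := by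
      intro z hz
      have hz2 : z * z = 1 := hsq z hz
      have hzinv : z⁻¹ = z := inv_eq_of_mul_eq_one_right hz2
      have hxz : x * z ∉ Subgroup.zpowers x := by
        intro hmem'
        apply hz
        have hm2 := (Subgroup.zpowers x).mul_mem
          ((Subgroup.zpowers x).inv_mem (Subgroup.mem_zpowers x)) hmem'
        simpa using hm2
      have h1 : x * z * (x * z) = 1 := hsq _ hxz
      rw [hzinv]
      have : z * x * z = x⁻¹ := by
        have := congrArg (fun w => x⁻¹ * w) h1
        simp only [mul_assoc] at this ⊢
        simpa using this
      exact this
    have hconjy : y * x * y⁻¹ = x⁻¹ := hconj y hy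
    have hconjpow : ∀ n : ℕ, y * x ^ n * y⁻¹ = (x ^ n)⁻¹ := by
      intro n
      rw [← conj_pow, hconjy, inv_pow]
    have hxy : ∀ n : ℕ, x ^ n * y = y * (x ^ n)⁻¹ := by
      intro n
      have := hconjpow n
      rw [hyinv] at this
      calc x ^ n * y = y * (y * x ^ n * y) := by
            rw [← mul_assoc, ← mul_assoc, hy2, one_mul]
        _ = y * (x ^ n)⁻¹ := by rw [this]
    have hyx : ∀ n : ℕ, y * x ^ n = (x ^ n)⁻¹ * y := by
      intro n
      have h := hconjpow n
      rw [hyinv] at h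
      calc y * x ^ n = (y * x ^ n * y) * y := by rw [mul_assoc, hy2, mul_one]
        _ = (x ^ n)⁻¹ * y := by rw [h]
    have hkey : ∀ i j : ZMod 4, x ^ (j - i).val = (x ^ i.val)⁻¹ * x ^ j.val := by
      intro i j
      have h := hpow i (j - i)
      have he : i + (j - i) = j := by ring
      rw [he] at h
      rw [h]
      group
    have hcover : ∀ g : G, g ∈ Subgroup.zpowers x ∨ g * y ∈ Subgroup.zpowers x := by
      intro g
      by_cases hg : g ∈ Subgroup.zpowers x
      · exact Or.inl hg
      · by_cases hgy : g * y ∈ Subgroup.zpowers x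
        · exact Or.inr hgy
        · exfalso
          have hg2 : g * g = 1 := hsq g hg
          have hginv : g⁻¹ = g := inv_eq_of_mul_eq_one_right hg2
          have hw := hconj (g * y) hgy
          have hcg : g * x * g⁻¹ = x⁻¹ := hconj g hg
          have hcalc : (g * y) * x * (g * y)⁻¹ = x := by
            calc (g * y) * x * (g * y)⁻¹ = g * (y * x * y⁻¹) * g⁻¹ := by group
              _ = g * x⁻¹ * g⁻¹ := by rw [hconjy]
              _ = (g * x * g⁻¹)⁻¹ := by group
              _ = x := by rw [hcg, inv_inv]
          rw [hcalc] at hw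
          apply hx2
          rw [pow_two]
          nth_rewrite 2 [hw]
          simp
    -- build the isomorphism
    let f : DihedralGroup 4 → G := fun d =>
      match d with
      | .r i => x ^ i.val
      | .sr i => y * x ^ i.val
    have hmul : ∀ a b : DihedralGroup 4, f (a * b) = f a * f b := by
      rintro (i | i) (j | j)
      · exact hpow i j
      · show y * x ^ (j - i).val = x ^ i.val * (y * x ^ j.val)
        rw [hkey i j, ← mul_assoc, ← mul_assoc, hxy i.val]
      · show y * x ^ (i + j).val = y * x ^ i.val * x ^ j.val
        rw [hpow i j, mul_assoc]
      · show x ^ (j - i).val = y * x ^ i.val * (y * x ^ j.val)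
        rw [hkey i j, hyx i.val, mul_assoc ((x ^ i.val)⁻¹) y, ← mul_assoc y y, hy2, one_mul]
    let φ : DihedralGroup 4 →* G := MonoidHom.mk' f hmul
    have hinj : Function.Injective φ := by
      rintro (i | i) (j | j) h
      · exact congrArg DihedralGroup.r (hinjpow i j h)
      · exfalso
        apply hy
        have : y = x ^ i.val * (x ^ j.val)⁻¹ := by
          have h' : x ^ i.val = y * x ^ j.val := h
          rw [h']; group
        rw [this]
        exact (Subgroup.zpowers x).mul_mem (pow_mem (Subgroup.mem_zpowers x) _)
          ((Subgroup.zpowers x).inv_mem (pow_mem (Subgroup.mem_zpowers x) _))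
      · exfalso
        apply hy
        have : y = x ^ j.val * (x ^ i.val)⁻¹ := by
          have h' : y * x ^ i.val = x ^ j.val := h
          rw [← h']; group
        rw [this]
        exact (Subgroup.zpowers x).mul_mem (pow_mem (Subgroup.mem_zpowers x) _)
          ((Subgroup.zpowers x).inv_mem (pow_mem (Subgroup.mem_zpowers x) _))
      · have h' : y * x ^ i.val = y * x ^ j.val := h
        exact congrArg DihedralGroup.sr (hinjpow i j (mul_left_cancel h'))
    have hsurj : Function.Surjective φ := by
      intro g
      rcases hcover g with hg | hg
      · obtain ⟨n, hn⟩ := (mem_powers_iff_mem_zpowers).mpr hg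
        refine ⟨.r (n : ZMod 4), ?_⟩
        show x ^ ((n : ZMod 4)).val = g
        rw [hnatpow n]; exact hn
      · obtain ⟨n, hn⟩ := (mem_powers_iff_mem_zpowers).mpr hg
        refine ⟨.sr (-(n : ZMod 4)), ?_⟩
        show y * x ^ (-(n : ZMod 4)).val = g
        have hinv4 : x ^ (-(n : ZMod 4)).val = (x ^ n)⁻¹ := by
          have h1 : x ^ ((n : ZMod 4)).val * x ^ (-(n : ZMod 4)).val = 1 := by
            rw [← hpow]
            simp
          rw [hnatpow n] at h1
          exact (inv_eq_of_mul_eq_one_right h1).symm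
        rw [hinv4]
        have hgn : g = x ^ n * y⁻¹ := by
          have h2 : g * y = x ^ n := hn.symm
          rw [← h2]
          group
        rw [hgn, hyinv, hxy n]
    exact ⟨(MulEquiv.ofBijective φ ⟨hinj, hsurj⟩).symm⟩
end

section
/- Let p be an odd prime and let G be a finite p-group of exponent p² that contains exactly one cyclic subgroup of order p². Then G is isomorphic to the cyclic group Z_{p²}. -/
lemma my_isCyclic_zpowers {G : Type*} [Group G] (y : G) :
    IsCyclic (Subgroup.zpowers y) := by
  refine ⟨⟨y, Subgroup.mem_zpowers y⟩, ?_⟩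
  rintro ⟨z, hz⟩
  obtain ⟨k, rfl⟩ := hz
  exact ⟨k, by ext; simp⟩

/-- Let p be an odd prime and let G be a finite p-group of exponent p²
that contains exactly one cyclic subgroup of order p². Then G is isomorphic to the
cyclic group Z_{p²}. -/
theorem oddPGroup_exp_sq_unique_cyclic (p : ℕ) (hp : p.Prime) (hodd : Odd p)
    (G : Type*) [Group G] [Finite G] (hG : IsPGroup p G)
    (hexp : Monoid.exponent G = p ^ 2)
    (huniq : ∃! H : Subgroup G, IsCyclic H ∧ Nat.card H = p ^ 2) :
    Nonempty (G ≃* Multiplicative (ZMod (p ^ 2))) := by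
  haveI : Fact p.Prime := ⟨hp⟩
  obtain ⟨H, -, hHuniq⟩ := huniq
  have hdvd : ∀ g : G, orderOf g ∣ p ^ 2 := fun g => hexp ▸ Monoid.order_dvd_exponent g
  have hcases : ∀ g : G, orderOf g = 1 ∨ orderOf g = p ∨ orderOf g = p ^ 2 := by
    intro g
    obtain ⟨i, hi, h⟩ := (Nat.dvd_prime_pow hp).mp (hdvd g)
    interval_cases i
    · left; simpa using h
    · right; left; simpa using h
    · right; right; exact h
  have hz : ∀ y : G, orderOf y = p ^ 2 → Subgroup.zpowers y = H := by
    intro y hy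
    exact hHuniq _ ⟨my_isCyclic_zpowers y, by rw [Nat.card_zpowers, hy]⟩
  -- there is an element of order p^2
  have hex : ∃ x : G, orderOf x = p ^ 2 := by
    by_contra hcon
    push_neg at hcon
    have hall : ∀ g : G, g ^ p = 1 := by
      intro g
      rcases hcases g with h | h | h
      · rw [orderOf_eq_one_iff.mp h, one_pow]
      · exact h ▸ pow_orderOf_eq_one g
      · exact absurd h (hcon g)
    have h1 := Monoid.exponent_dvd_of_forall_pow_eq_one hall
    rw [hexp] at h1
    have := Nat.le_of_dvd hp.pos h1
    nlinarith [hp.two_le]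
  obtain ⟨x, hx⟩ := hex
  obtain ⟨m, hm⟩ := hodd
  have hxp_ne : x ^ p ≠ 1 := by
    intro h
    have h2 := orderOf_dvd_of_pow_eq_one h
    rw [hx] at h2
    have := Nat.le_of_dvd hp.pos h2
    nlinarith [hp.two_le]
  -- every element is a power of x
  have hmem : ∀ g : G, g ∈ Subgroup.zpowers x := by
    intro g
    by_contra hg
    rcases hcases g with hog | hog | hog
    · exact hg (orderOf_eq_one_iff.mp hog ▸ (Subgroup.zpowers x).one_mem)
    swap
    · have := Subgroup.mem_zpowers g
      rw [hz g hog, ← hz x hx] at this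
      exact hg this
    -- main case : orderOf g = p
    have hgp : g ^ p = 1 := hog ▸ pow_orderOf_eq_one g
    have hconj : orderOf (g * x * g⁻¹) = p ^ 2 := by
      have hsc : SemiconjBy g x (g * x * g⁻¹) := by unfold SemiconjBy; group
      rw [← hsc.orderOf_eq g, hx]
    have hcmem : g * x * g⁻¹ ∈ Subgroup.zpowers x := by
      have := Subgroup.mem_zpowers (g * x * g⁻¹)
      rwa [hz _ hconj, ← hz x hx] at this
    rw [← mem_powers_iff_mem_zpowers] at hcmem
    obtain ⟨k, hk⟩ := hcmem
    have hk' : x ^ k = g * x * g⁻¹ := hk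
    have hgx : g * x = x ^ k * g := by rw [hk']; group
    have lemma1 : ∀ n : ℕ, g * x ^ n = x ^ (n * k) * g := by
      intro n
      induction n with
      | zero => simp
      | succ n ih =>
        rw [pow_succ, ← mul_assoc, ih, mul_assoc, hgx, ← mul_assoc, ← pow_add, Nat.succ_mul]
    have lemma2 : ∀ n : ℕ, g ^ n * x = x ^ (k ^ n) * g ^ n := by
      intro n
      induction n with
      | zero => simp
      | succ n ih =>
        rw [pow_succ', mul_assoc, ih, ← mul_assoc, lemma1, ← pow_succ k n,
          mul_assoc, ← pow_succ' g n]
    -- k^p ≡ 1 mod p^2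
    have hkp : k ^ p ≡ 1 [MOD p ^ 2] := by
      have h2 := lemma2 p
      rw [hgp, one_mul, mul_one] at h2
      have h4 : x ^ (k ^ p) = x ^ 1 := by rw [pow_one]; exact h2.symm
      have := pow_eq_pow_iff_modEq.mp h4
      rwa [hx] at this
    -- k ≡ 1 mod p
    have hk1 : k ≡ 1 [MOD p] := by
      have h1 : k ^ p ≡ 1 [MOD p] := hkp.of_dvd (dvd_pow_self p two_ne_zero)
      have h2 : k ^ p ≡ k [MOD p] := by
        have h3 := ZMod.pow_card (k : ZMod p)
        rw [← Nat.cast_pow] at h3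
        exact (ZMod.natCast_eq_natCast_iff _ _ _).mp h3
      exact h2.symm.trans h1
    have hkpos : 1 ≤ k := by
      rcases Nat.eq_zero_or_pos k with rfl | h
      · exfalso
        have h0 : 0 % p = 1 % p := hk1
        rw [Nat.zero_mod, Nat.mod_eq_of_lt hp.one_lt] at h0
        omega
      · exact h
    obtain ⟨t, ht⟩ : ∃ t, k = p * t + 1 := by
      obtain ⟨t, ht⟩ := (Nat.modEq_iff_dvd' hkpos).mp hk1.symm
      exact ⟨t, by omega⟩
    -- k^i ≡ 1 + i*(p*t) mod p^2
    have hpow_i : ∀ i : ℕ, k ^ i ≡ 1 + i * (p * t) [MOD p ^ 2] := by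
      intro i
      induction i with
      | zero => simpa using Nat.ModEq.refl 1
      | succ n ih =>
        calc k ^ (n + 1) = k ^ n * k := pow_succ k n
          _ ≡ (1 + n * (p * t)) * k [MOD p ^ 2] := ih.mul_right k
          _ = 1 + (n + 1) * (p * t) + (n * t * t) * p ^ 2 := by rw [ht]; ring
          _ ≡ 1 + (n + 1) * (p * t) [MOD p ^ 2] := Nat.add_mul_mod_self_right ..
    have hsum : ∀ n : ℕ, (∑ i ∈ Finset.range n, k ^ i) ≡
        n + (∑ i ∈ Finset.range n, i) * (p * t) [MOD p ^ 2] := by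
      intro n
      induction n with
      | zero => simpa using Nat.ModEq.refl 0
      | succ n ih =>
        rw [Finset.sum_range_succ, Finset.sum_range_succ]
        calc (∑ i ∈ Finset.range n, k ^ i) + k ^ n
            ≡ (n + (∑ i ∈ Finset.range n, i) * (p * t)) + (1 + n * (p * t)) [MOD p ^ 2] :=
              ih.add (hpow_i n)
          _ = (n + 1 : ℕ) + ((∑ i ∈ Finset.range n, i) + n) * (p * t) := by ring
    have hsumid : (∑ i ∈ Finset.range p, i) = p * m := by
      have h2 := Finset.sum_range_id_mul_two p
      have h3 : p - 1 = 2 * m := by omega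
      have h2' : (∑ i ∈ Finset.range p, i) * 2 = (p * m) * 2 := by
        rw [h2, h3]; ring
      omega
    have hS : (∑ i ∈ Finset.range p, k ^ i) ≡ p [MOD p ^ 2] := by
      calc (∑ i ∈ Finset.range p, k ^ i)
          ≡ p + (∑ i ∈ Finset.range p, i) * (p * t) [MOD p ^ 2] := hsum p
        _ = p + (m * t) * p ^ 2 := by rw [hsumid]; ring
        _ ≡ p [MOD p ^ 2] := Nat.add_mul_mod_self_right ..
    -- (x*g)^n formula
    have hxg_pow : ∀ n : ℕ, (x * g) ^ n = x ^ (∑ i ∈ Finset.range n, k ^ i) * g ^ n := by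
      intro n
      induction n with
      | zero => simp
      | succ n ih =>
        rw [pow_succ, ih, Finset.sum_range_succ, pow_add, pow_succ]
        calc x ^ (∑ i ∈ Finset.range n, k ^ i) * g ^ n * (x * g)
            = x ^ (∑ i ∈ Finset.range n, k ^ i) * (g ^ n * x) * g := by group
          _ = x ^ (∑ i ∈ Finset.range n, k ^ i) * (x ^ (k ^ n) * g ^ n) * g := by rw [lemma2]
          _ = x ^ (∑ i ∈ Finset.range n, k ^ i) * x ^ (k ^ n) * (g ^ n * g) := by group
    have hxgp : (x * g) ^ p = x ^ p := by
      rw [hxg_pow p, hgp, mul_one]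
      exact pow_eq_pow_iff_modEq.mpr (by rw [hx]; exact hS)
    have hordxg : orderOf (x * g) = p ^ 2 := by
      rcases hcases (x * g) with h | h | h
      · exact absurd (by rw [← hxgp, orderOf_eq_one_iff.mp h, one_pow]) hxp_ne
      · exact absurd (by rw [← hxgp, ← h, pow_orderOf_eq_one]) hxp_ne
      · exact h
    have hxgmem : x * g ∈ Subgroup.zpowers x := by
      have := Subgroup.mem_zpowers (x * g)
      rwa [hz _ hordxg, ← hz x hx] at this
    have : g ∈ Subgroup.zpowers x := by
      have h2 := (Subgroup.zpowers x).mul_mem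
        ((Subgroup.zpowers x).inv_mem (Subgroup.mem_zpowers x)) hxgmem
      simpa using h2
    exact hg this
  -- conclusion
  haveI hcyc : IsCyclic G := ⟨x, hmem⟩
  have htop : Subgroup.zpowers x = ⊤ := by
    rw [eq_top_iff]
    exact fun g _ => hmem g
  have hcard : Nat.card G = p ^ 2 := by
    rw [← Subgroup.card_top (G := G), ← htop, Nat.card_zpowers, hx]
  have hcard2 : Nat.card (Multiplicative (ZMod (p ^ 2))) = p ^ 2 := Nat.card_zmod _
  exact ⟨mulEquivOfCyclicCardEq (by rw [hcard, hcard2])⟩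
end

section
/- Let G be a non-trivial finite group and let g ∈ G be a non-identity element. Then g is an isolated vertex of the graph P_E(G) − P(G) (equivalently, g is not a vertex of D(G)) if and only if either ⟨g⟩ is a maximal cyclic subgroup of G, or every cyclic subgroup of G containing g has prime-power order. -/
/-- Adjacency in the power graph `P(G)`: distinct `a`, `b` are adjacent iff one is a
power of the other. -/
def powAdj {G : Type*} [Group G] (a b : G) : Prop :=
  a ≠ b ∧ (a ∈ Subgroup.zpowers b ∨ b ∈ Subgroup.zpowers a)

/-- Adjacency in the enhanced power graph `P_E(G)`: distinct `a`, `b` are adjacent iff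
both are powers of a common element `c`. -/
def enhAdj {G : Type*} [Group G] (a b : G) : Prop :=
  a ≠ b ∧ ∃ c : G, a ∈ Subgroup.zpowers c ∧ b ∈ Subgroup.zpowers c

/-- Adjacency in the difference graph `D(G) = P_E(G) − P(G)`: adjacent in the enhanced
power graph but not in the power graph. -/
def diffAdj {G : Type*} [Group G] (a b : G) : Prop :=
  enhAdj a b ∧ ¬ powAdj a b

/-- A subgroup `H` of `G` is a maximal cyclic subgroup if it is cyclic and is not
properly contained in any cyclic subgroup of `G` other than itself. -/
def IsMaximalCyclic {G : Type*} [Group G] (H : Subgroup G) : Prop :=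
  IsCyclic H ∧ ∀ K : Subgroup G, IsCyclic K → H ≤ K → H = K

/-!
Inside a cyclic group `⟨c⟩` of order `n`, membership `a ∈ ⟨b⟩` is divisibility of orders, and
every divisor of `n` is the order of some element. Hence `g` is isolated in `D(G)` exactly when,
for every `c` with `g ∈ ⟨c⟩`, all divisors of `orderOf c` are comparable with `orderOf g`
under divisibility. For `1 < d ∣ n` this happens iff `d = n` or `n` is a prime power: otherwise
either the full `r`-part of `n` (for a prime `r` with `v_r d < v_r n`) or a prime of `n` not
dividing `d` is incomparable with `d`. Finally, a single cyclic overgroup `⟨k⟩ ≠ ⟨g⟩` forces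
`orderOf g` to be a prime power, which turns the pointwise dichotomy into the global one.
-/

open Subgroup

theorem IsPrimePow.dvd_or_dvd {n a b : ℕ} (hn : IsPrimePow n) (ha : a ∣ n) (hb : b ∣ n) :
    a ∣ b ∨ b ∣ a := by
  obtain ⟨p, k, hp, -, rfl⟩ := hn
  obtain ⟨i, -, rfl⟩ := (Nat.dvd_prime_pow hp.nat_prime).mp ha
  obtain ⟨j, -, rfl⟩ := (Nat.dvd_prime_pow hp.nat_prime).mp hb
  exact (le_total i j).imp (pow_dvd_pow p) (pow_dvd_pow p)

theorem Nat.eq_or_isPrimePow_of_forall_dvd_or_dvd {d n : ℕ} (hd : 1 < d) (hdn : d ∣ n)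
    (hn : n ≠ 0) (h : ∀ e, e ∣ n → e ∣ d ∨ d ∣ e) : d = n ∨ IsPrimePow n := by
  by_contra! ⟨hne, hpp⟩
  obtain ⟨r, hr, hrd⟩ : ∃ r, r.Prime ∧ d.factorization r < n.factorization r := by
    by_contra! hle
    exact hne (Nat.dvd_antisymm hdn ((Nat.factorization_prime_le_iff_dvd hn (by omega)).mp hle))
  by_cases hs : ∃ s, s.Prime ∧ s ∣ d ∧ s ≠ r
  · obtain ⟨s, hs, hsd, hsr⟩ := hs
    rcases h (ordProj[r] n) (Nat.ordProj_dvd n r) with hrd' | hdr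
    · have := (hr.pow_dvd_iff_le_factorization (by omega)).mp hrd'
      omega
    · exact hsr ((Nat.prime_dvd_prime_iff_eq hs hr).mp (hs.dvd_of_dvd_pow (hsd.trans hdr)))
  · push Not at hs
    obtain ⟨q, hq, hqn, hqr⟩ : ∃ q, q.Prime ∧ q ∣ n ∧ q ≠ r := by
      by_contra! hq
      have hrn : r ∣ n := Nat.dvd_of_factorization_pos (by omega)
      exact hpp (isPrimePow_iff_unique_prime_dvd.mpr
        ⟨r, ⟨hr, hrn⟩, fun q hq' => hq q hq'.1 hq'.2⟩)
    rcases h q hqn with hqd | hdq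
    · exact hqr (hs q hq hqd)
    · rcases (Nat.dvd_prime hq).mp hdq with rfl | rfl
      · omega
      · exact hqr (hs d hq dvd_rfl)

section CyclicSubgroups

variable {G : Type*} [Group G] [Finite G]

theorem mem_zpowers_pow_orderOf_div {x c : G} {m : ℕ} (hx : x ∈ zpowers c)
    (hm : m ∣ orderOf c) (hxm : x ^ m = 1) : x ∈ zpowers (c ^ (orderOf c / m)) := by
  obtain ⟨i, rfl⟩ := (Submonoid.mem_powers_iff _ _).mp (mem_powers_iff_mem_zpowers.mpr hx)
  obtain ⟨k, hk⟩ := hm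
  have hm0 : 0 < m := Nat.pos_of_mul_pos_right (hk ▸ orderOf_pos c)
  have hki : k ∣ i := by
    have : m * k ∣ i * m := hk ▸ orderOf_dvd_of_pow_eq_one (by rwa [pow_mul])
    exact Nat.dvd_of_mul_dvd_mul_left hm0 (by rwa [mul_comm i] at this)
  obtain ⟨t, rfl⟩ := hki
  rw [hk, Nat.mul_div_cancel_left k hm0, pow_mul]
  exact pow_mem (mem_zpowers _) t

theorem mem_zpowers_iff_orderOf_dvd {a b c : G} (ha : a ∈ zpowers c) (hb : b ∈ zpowers c) :
    a ∈ zpowers b ↔ orderOf a ∣ orderOf b := by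
  refine ⟨orderOf_dvd_of_mem_zpowers, fun hab => ?_⟩
  have hbc : orderOf b ∣ orderOf c := orderOf_dvd_of_mem_zpowers hb
  have hzb : zpowers b = zpowers (c ^ (orderOf c / orderOf b)) := by
    refine eq_of_le_of_card_ge
      (zpowers_le.mpr (mem_zpowers_pow_orderOf_div hb hbc (pow_orderOf_eq_one b))) ?_
    rw [Nat.card_zpowers, Nat.card_zpowers, orderOf_pow_orderOf_div (orderOf_pos c).ne' hbc]
  rw [hzb]
  exact mem_zpowers_pow_orderOf_div ha hbc (orderOf_dvd_iff_pow_eq_one.mp hab)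

theorem isMaximalCyclic_zpowers_iff {g : G} :
    IsMaximalCyclic (zpowers g) ↔ ∀ c : G, g ∈ zpowers c → orderOf c = orderOf g := by
  refine ⟨fun hmax c hgc => ?_, fun h => ⟨inferInstance, fun K hK hgK => ?_⟩⟩
  · rw [← Nat.card_zpowers, ← Nat.card_zpowers g,
      hmax.2 _ inferInstance (zpowers_le.mpr hgc)]
  · obtain ⟨k, rfl⟩ := K.isCyclic_iff_exists_zpowers_eq_top.mp hK
    refine eq_of_le_of_card_ge hgK ?_
    rw [Nat.card_zpowers, Nat.card_zpowers, h k (zpowers_le.mp hgK)]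

end CyclicSubgroups

theorem diffAdj_iff {G : Type*} [Group G] {g h : G} :
    diffAdj g h ↔ (∃ c : G, g ∈ zpowers c ∧ h ∈ zpowers c) ∧ g ∉ zpowers h ∧ h ∉ zpowers g := by
  unfold diffAdj enhAdj powAdj
  constructor
  · rintro ⟨⟨hne, hc⟩, hpow⟩
    exact ⟨hc, fun hg => hpow ⟨hne, Or.inl hg⟩, fun hh => hpow ⟨hne, Or.inr hh⟩⟩
  · rintro ⟨hc, hgh, hhg⟩
    exact ⟨⟨fun heq => hgh (heq ▸ mem_zpowers h), hc⟩, fun hpow => hpow.2.elim hgh hhg⟩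

theorem forall_not_diffAdj_iff {G : Type*} [Group G] [Finite G] {g : G} :
    (∀ h : G, ¬ diffAdj g h) ↔
      ∀ c : G, g ∈ zpowers c → ∀ e, e ∣ orderOf c → e ∣ orderOf g ∨ orderOf g ∣ e := by
  constructor
  · intro hiso c hgc e he
    by_contra! ⟨hed, hde⟩
    have hec : c ^ (orderOf c / e) ∈ zpowers c := pow_mem (mem_zpowers c) _
    have horder : orderOf (c ^ (orderOf c / e)) = e := orderOf_pow_orderOf_div (orderOf_pos c).ne' he
    refine hiso _ (diffAdj_iff.mpr ⟨⟨c, hgc, hec⟩, ?_, ?_⟩)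
    · rwa [mem_zpowers_iff_orderOf_dvd hgc hec, horder]
    · rwa [mem_zpowers_iff_orderOf_dvd hec hgc, horder]
  · intro hchain h hgh
    obtain ⟨⟨c, hgc, hhc⟩, hgh, hhg⟩ := diffAdj_iff.mp hgh
    rw [mem_zpowers_iff_orderOf_dvd hgc hhc] at hgh
    rw [mem_zpowers_iff_orderOf_dvd hhc hgc] at hhg
    exact (hchain c hgc _ (orderOf_dvd_of_mem_zpowers hhc)).elim hhg hgh

theorem isolated_iff_maximalCyclic_or_primePow_general {G : Type*} [Group G] [Finite G]
    (g : G) (hg : g ≠ 1) :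
    (∀ h : G, ¬ diffAdj g h) ↔
      (IsMaximalCyclic (Subgroup.zpowers g) ∨
        ∀ H : Subgroup G, IsCyclic H → g ∈ H → IsPrimePow (Nat.card H)) := by
  have hg1 : 1 < orderOf g :=
    lt_of_le_of_ne (orderOf_pos g) (fun h => hg (orderOf_eq_one_iff.mp h.symm))
  rw [forall_not_diffAdj_iff, isMaximalCyclic_zpowers_iff]
  constructor
  · intro hchain
    have hdich : ∀ c, g ∈ zpowers c → orderOf c = orderOf g ∨ IsPrimePow (orderOf c) :=
      fun c hgc => (Nat.eq_or_isPrimePow_of_forall_dvd_or_dvd hg1 (orderOf_dvd_of_mem_zpowers hgc)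
        (orderOf_pos c).ne' (hchain c hgc)).imp Eq.symm id
    refine or_iff_not_imp_left.mpr fun hmax => ?_
    push Not at hmax
    obtain ⟨k, hgk, hk⟩ := hmax
    have hgpp : IsPrimePow (orderOf g) :=
      ((hdich k hgk).resolve_left hk).dvd (orderOf_dvd_of_mem_zpowers hgk) hg1.ne'
    intro H hH hgH
    obtain ⟨c, rfl⟩ := H.isCyclic_iff_exists_zpowers_eq_top.mp hH
    rw [Nat.card_zpowers]
    exact (hdich c hgH).elim (fun hc => hc ▸ hgpp) id
  · rintro (hmax | hpp) c hgc e he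
    · exact Or.inl (hmax c hgc ▸ he)
    · have hc := hpp _ inferInstance hgc
      rw [Nat.card_zpowers] at hc
      exact hc.dvd_or_dvd he (orderOf_dvd_of_mem_zpowers hgc)

/-- Let G be a non-trivial finite group and let g ∈ G be a non-identity
element. Then g is an isolated vertex of the graph P_E(G) − P(G) (equivalently, g is
not a vertex of D(G)) if and only if either ⟨g⟩ is a maximal cyclic subgroup of G, or
every cyclic subgroup of G containing g has prime-power order. -/
theorem isolated_iff_maximalCyclic_or_primePow {G : Type*} [Group G] [Finite G]
    [Nontrivial G] (g : G) (hg : g ≠ 1) :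
    (∀ h : G, ¬ diffAdj g h) ↔
      (IsMaximalCyclic (Subgroup.zpowers g) ∨
        ∀ H : Subgroup G, IsCyclic H → g ∈ H → IsPrimePow (Nat.card H)) :=
  isolated_iff_maximalCyclic_or_primePow_general g hg
end

section
/- Let G be a finite nilpotent group whose order is divisible by exactly r ≥ 2 distinct primes p₁, ..., p_r, and let P_i denote the (unique) Sylow p_i-subgroup of G. Then for non-identity elements x ∈ P_i and y ∈ P_j, x and y are adjacent in the difference graph D(G) if and only if i ≠ j; hence the subgraph of D(G) induced by the set (P₁ ∪ P₂ ∪ ⋯ ∪ P_r) \ {e} is the complete r-partite graph K_{|P₁|−1, |P₂|−1, ..., |P_r|−1}. -/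
/-!
Of two `p`-elements lying in a common cyclic group one is a power of the other, since a
finite cyclic group has exactly one subgroup of each order dividing its order and the orders
`p ^ s`, `p ^ t` are comparable under divisibility; so elements of one Sylow subgroup are never
adjacent in `D(G)`. For distinct primes the Sylow subgroups of a nilpotent group are normal and
intersect trivially, hence commute elementwise, and commuting elements `x`, `y` of coprime
orders are both powers of `x * y` while neither is a power of the other.
-/

open Subgroup

section

variable {G : Type*} [Group G]

theorem IsCyclic.mem_zpowers_of_orderOf_dvd [Finite G] [IsCyclic G] {a b : G}
    (h : orderOf a ∣ orderOf b) : a ∈ zpowers b := by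
  classical
  have := Fintype.ofFinite G
  let roots : Finset G := {g | g ^ orderOf b = 1}
  have hsub : (zpowers b : Set G).toFinset ⊆ roots := fun g hg => by
    simpa [roots, orderOf_dvd_iff_pow_eq_one] using
      orderOf_dvd_of_mem_zpowers (Set.mem_toFinset.mp hg)
  -- a cyclic group has at most `n` solutions of `g ^ n = 1`, and `zpowers b` already has `n`
  have hcard : roots.card ≤ (zpowers b : Set G).toFinset.card := by
    simp only [Set.toFinset_card, SetLike.coe_sort_coe, Fintype.card_zpowers]
    exact IsCyclic.card_pow_eq_one_le (orderOf_pos b)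
  have ha : a ∈ roots := by simpa [roots, orderOf_dvd_iff_pow_eq_one] using h
  rwa [← Finset.eq_of_subset_of_card_le hsub hcard, Set.mem_toFinset] at ha

theorem mem_zpowers_of_orderOf_dvd_of_mem_zpowers [Finite G] {a b c : G}
    (ha : a ∈ zpowers c) (hb : b ∈ zpowers c) (h : orderOf a ∣ orderOf b) : a ∈ zpowers b := by
  obtain ⟨k, hk⟩ := IsCyclic.mem_zpowers_of_orderOf_dvd
    (a := (⟨a, ha⟩ : zpowers c)) (b := ⟨b, hb⟩) (by simpa only [orderOf_mk] using h)
  exact ⟨k, congrArg Subtype.val hk⟩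

theorem powAdj_of_enhAdj_of_orderOf_eq_pow [Finite G] {x y : G} {p s t : ℕ}
    (hx : orderOf x = p ^ s) (hy : orderOf y = p ^ t) (h : enhAdj x y) : powAdj x y := by
  obtain ⟨hne, c, hxc, hyc⟩ := h
  refine ⟨hne, ?_⟩
  rcases le_total s t with hst | hts
  · exact .inl (mem_zpowers_of_orderOf_dvd_of_mem_zpowers hxc hyc
      (hx ▸ hy ▸ pow_dvd_pow p hst))
  · exact .inr (mem_zpowers_of_orderOf_dvd_of_mem_zpowers hyc hxc
      (hx ▸ hy ▸ pow_dvd_pow p hts))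

theorem IsPGroup.powAdj_of_enhAdj [Finite G] {p : ℕ} [Fact p.Prime] {H : Subgroup G}
    (hH : IsPGroup p H) {x y : G} (hx : x ∈ H) (hy : y ∈ H) (h : enhAdj x y) :
    powAdj x y := by
  obtain ⟨s, hs⟩ := IsPGroup.iff_orderOf.mp hH ⟨x, hx⟩
  obtain ⟨t, ht⟩ := IsPGroup.iff_orderOf.mp hH ⟨y, hy⟩
  rw [orderOf_mk] at hs ht
  exact powAdj_of_enhAdj_of_orderOf_eq_pow hs ht h

theorem not_mem_zpowers_of_coprime_orderOf {x y : G} (hx : x ≠ 1)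
    (hco : (orderOf x).Coprime (orderOf y)) : x ∉ zpowers y := fun h =>
  hx (orderOf_eq_one_iff.mp (hco.eq_one_of_dvd (orderOf_dvd_of_mem_zpowers h)))

theorem Commute.mem_zpowers_mul_of_coprime {x y : G} (hc : Commute x y)
    (hco : (orderOf x).Coprime (orderOf y)) : x ∈ zpowers (x * y) := by
  obtain ⟨m, hm⟩ := exists_pow_eq_self_of_coprime hco.symm
  have hpow : x ^ orderOf y = (x * y) ^ orderOf y := by
    rw [hc.mul_pow, pow_orderOf_eq_one, mul_one]
  simpa only [pow_mul, ← hpow, hm] using npow_mem_zpowers (x * y) (orderOf y * m)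

theorem diffAdj_of_commute_of_coprime {x y : G} (hc : Commute x y)
    (hco : (orderOf x).Coprime (orderOf y)) (hx : x ≠ 1) (hy : y ≠ 1) : diffAdj x y := by
  have hxy := not_mem_zpowers_of_coprime_orderOf hx hco
  have hyx := not_mem_zpowers_of_coprime_orderOf hy hco.symm
  have hx_mem : x ∈ zpowers (x * y) := hc.mem_zpowers_mul_of_coprime hco
  have hy_mem : y ∈ zpowers (x * y) := hc.eq ▸ hc.symm.mem_zpowers_mul_of_coprime hco.symm
  refine ⟨⟨fun h => hxy (h ▸ mem_zpowers y), x * y, hx_mem, hy_mem⟩, ?_⟩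
  rintro ⟨-, h | h⟩
  exacts [hxy h, hyx h]

theorem diffAdj_of_mem_sylow_of_ne [Finite G] [Group.IsNilpotent G] {p q : ℕ} [Fact p.Prime]
    [Fact q.Prime] (hpq : p ≠ q) (P : Sylow p G) (Q : Sylow q G) {x y : G} (hx : x ∈ P)
    (hy : y ∈ Q) (hx1 : x ≠ 1) (hy1 : y ≠ 1) : diffAdj x y := by
  have hc : Commute x y := commute_of_normal_of_disjoint _ _ inferInstance inferInstance
    (IsPGroup.disjoint_of_ne p q hpq _ _ P.isPGroup' Q.isPGroup') x y hx hy
  have hco : (orderOf x).Coprime (orderOf y) :=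
    ((IsPGroup.coprime_card_of_ne p q hpq _ _ P.isPGroup' Q.isPGroup').coprime_dvd_left
      (orderOf_dvd_natCard _ hx)).coprime_dvd_right (orderOf_dvd_natCard _ hy)
  exact diffAdj_of_commute_of_coprime hc hco hx1 hy1

end

theorem nilpotent_sylow_diffAdj_iff_general {G : Type*} [Group G] [Finite G]
    (hnil : Group.IsNilpotent G) (r : ℕ)
    (p : Fin r → ℕ) (hp : ∀ i, (p i).Prime) (hinj : Function.Injective p)
    (P : (i : Fin r) → Sylow (p i) G)
    (i j : Fin r) (x y : G) (hx : x ∈ P i) (hy : y ∈ P j)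
    (hx1 : x ≠ 1) (hy1 : y ≠ 1) :
    diffAdj x y ↔ i ≠ j := by
  have := Fact.mk (hp i)
  have := Fact.mk (hp j)
  refine ⟨?_, fun hij => diffAdj_of_mem_sylow_of_ne (hinj.ne hij) (P i) (P j) hx hy hx1 hy1⟩
  rintro ⟨hxy, hnot⟩ rfl
  exact hnot ((P i).isPGroup'.powAdj_of_enhAdj hx hy hxy)

/-- Let G be a finite nilpotent group whose order is divisible by
exactly r ≥ 2 distinct primes p₁, ..., p_r, and let P_i denote the (unique) Sylow
p_i-subgroup of G. Then for non-identity elements x ∈ P_i and y ∈ P_j, x and y are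
adjacent in the difference graph D(G) if and only if i ≠ j; hence the subgraph of
D(G) induced by (P₁ ∪ ⋯ ∪ P_r) \ {e} is the complete r-partite graph
K_{|P₁|−1, ..., |P_r|−1}. -/
theorem nilpotent_sylow_diffAdj_iff {G : Type*} [Group G] [Finite G]
    (hnil : Group.IsNilpotent G) (r : ℕ) (hr : 2 ≤ r)
    (p : Fin r → ℕ) (hp : ∀ i, (p i).Prime) (hinj : Function.Injective p)
    (hfac : (Nat.card G).primeFactors = Finset.image p Finset.univ)
    (P : (i : Fin r) → Sylow (p i) G)
    (i j : Fin r) (x y : G) (hx : x ∈ P i) (hy : y ∈ P j)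
    (hx1 : x ≠ 1) (hy1 : y ≠ 1) :
    diffAdj x y ↔ i ≠ j :=
  nilpotent_sylow_diffAdj_iff_general hnil r p hp hinj P i j x y hx hy hx1 hy1
end

section
/- Let p₁ ≠ p₂ be primes and let G = P₁ × P₂, where P_i is a non-trivial finite p_i-group of exponent p_i for i = 1, 2. Then a non-identity element of G is a non-isolated vertex of P_E(G) − P(G) if and only if its order is p₁ or p₂, and two such vertices are adjacent in D(G) if and only if one has order p₁ and the other has order p₂; consequently the difference graph D(G) is the complete bipartite graph K_{|P₁|−1, |P₂|−1}. -/
/-! Every element of `P₁ × P₂` has order dividing `p₁ p₂`. In a cyclic group of finite order an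
element `h` is a power of `g` as soon as `|h|` divides `|g|`, so two vertices with a common cyclic
overgroup are adjacent in `D(G)` exactly when neither order divides the other; among the divisors
`1, p₁, p₂, p₁ p₂` only `p₁, p₂` are incomparable. Conversely the elements of order `p₁` are the
`(a, 1)` with `a ≠ 1`, those of order `p₂` the `(1, b)` with `b ≠ 1`, and such a pair commutes with
coprime orders, so both are powers of their product `(a, b)`. -/

open Subgroup

namespace Nat

theorem eq_and_eq_or_eq_and_eq_of_dvd_mul_of_not_dvd {p q d e : ℕ} (hp : p.Prime) (hq : q.Prime)
    (hd : d ∣ p * q) (he : e ∣ p * q) (hde : ¬d ∣ e) (hed : ¬e ∣ d) :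
    (d = p ∧ e = q) ∨ (d = q ∧ e = p) := by
  obtain ⟨d₁, d₂, hd₁, hd₂, rfl⟩ := Nat.dvd_mul.mp hd
  obtain ⟨e₁, e₂, he₁, he₂, rfl⟩ := Nat.dvd_mul.mp he
  rcases (Nat.dvd_prime hp).mp hd₁ with rfl | rfl <;>
  rcases (Nat.dvd_prime hq).mp hd₂ with rfl | rfl <;>
  rcases (Nat.dvd_prime hp).mp he₁ with rfl | rfl <;>
  rcases (Nat.dvd_prime hq).mp he₂ with rfl | rfl <;>
  simp_all

end Nat

section Group

variable {G : Type*} [Group G]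

theorem pow_gcd_orderOf_mem_zpowers_pow (c : G) (m : ℕ) :
    c ^ (orderOf c).gcd m ∈ zpowers (c ^ m) := by
  refine mem_zpowers_iff.mpr ⟨(orderOf c).gcdB m, ?_⟩
  have bezout := congr_arg (c ^ ·) ((orderOf c).gcd_eq_gcd_ab m)
  simp only [zpow_add, zpow_mul, zpow_natCast, pow_orderOf_eq_one, one_zpow, one_mul] at bezout
  exact bezout.symm

theorem mem_zpowers_of_orderOf_dvd {c g h : G} (hc : IsOfFinOrder c)
    (hg : g ∈ zpowers c) (hh : h ∈ zpowers c) (hd : orderOf h ∣ orderOf g) :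
    h ∈ zpowers g := by
  obtain ⟨m, rfl⟩ := (Submonoid.mem_powers_iff _ _).mp (hc.mem_powers_iff_mem_zpowers.mpr hg)
  obtain ⟨k, rfl⟩ := (Submonoid.mem_powers_iff _ _).mp (hc.mem_powers_iff_mem_zpowers.mpr hh)
  have hn := hc.orderOf_pos
  -- `c ^ gcd(|c|, m)` is a power of `c ^ m`, and `h ^ |g| = 1` forces `gcd(|c|, m) ∣ k`.
  obtain ⟨s, rfl⟩ : (orderOf c).gcd m ∣ k := by
    refine Nat.dvd_of_mul_dvd_mul_right (Nat.div_pos (Nat.gcd_le_left m hn)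
      (Nat.gcd_pos_of_pos_left m hn)) ?_
    rw [Nat.mul_div_cancel' (Nat.gcd_dvd_left _ m), ← hc.orderOf_pow]
    exact orderOf_dvd_of_pow_eq_one (by rw [pow_mul, orderOf_dvd_iff_pow_eq_one.mp hd])
  rw [pow_mul]
  exact pow_mem (pow_gcd_orderOf_mem_zpowers_pow c m) s

theorem Commute.mem_zpowers_mul_of_coprime_s14 {a b : G} (hab : Commute a b)
    (hcop : (orderOf a).Coprime (orderOf b)) : a ∈ zpowers (a * b) := by
  -- With `|a| u + |b| v = 1`: `(a b) ^ (|b| v) = a ^ (|b| v) = a`.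
  refine mem_zpowers_iff.mpr ⟨orderOf b * (orderOf a).gcdB (orderOf b), ?_⟩
  have bezout := congr_arg (a ^ ·) ((orderOf a).gcd_eq_gcd_ab (orderOf b))
  simp only [hcop.gcd_eq_one, Nat.cast_one, zpow_one, zpow_add, zpow_mul, zpow_natCast,
    pow_orderOf_eq_one, one_zpow, one_mul] at bezout
  rw [hab.mul_zpow, zpow_mul b, zpow_natCast, pow_orderOf_eq_one, one_zpow, mul_one, zpow_mul,
    zpow_natCast]
  exact bezout.symm

end Group

section DiffGraph

variable {G : Type*} [Group G] {a b : G}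

theorem diffAdj.symm (h : diffAdj a b) : diffAdj b a :=
  ⟨⟨h.1.1.symm, h.1.2.imp fun _ hc => hc.symm⟩, fun hP => h.2 ⟨hP.1.symm, hP.2.symm⟩⟩

theorem diffAdj_of_enhAdj_of_not_dvd (h : enhAdj a b) (hab : ¬orderOf a ∣ orderOf b)
    (hba : ¬orderOf b ∣ orderOf a) : diffAdj a b := by
  refine ⟨h, ?_⟩
  rintro ⟨-, ha | hb⟩
  exacts [hab (orderOf_dvd_of_mem_zpowers ha), hba (orderOf_dvd_of_mem_zpowers hb)]

theorem diffAdj.not_orderOf_dvd (hG : IsMulTorsion G) (h : diffAdj a b) :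
    ¬orderOf a ∣ orderOf b ∧ ¬orderOf b ∣ orderOf a := by
  obtain ⟨⟨hne, c, ha, hb⟩, hP⟩ := h
  exact ⟨fun hd => hP ⟨hne, .inl (mem_zpowers_of_orderOf_dvd (hG c) hb ha hd)⟩,
    fun hd => hP ⟨hne, .inr (mem_zpowers_of_orderOf_dvd (hG c) ha hb hd)⟩⟩

theorem Commute.diffAdj (h : Commute a b) (hcop : (orderOf a).Coprime (orderOf b))
    (hab : ¬orderOf a ∣ orderOf b) (hba : ¬orderOf b ∣ orderOf a) : diffAdj a b := by
  refine diffAdj_of_enhAdj_of_not_dvd ⟨?_, a * b, ?_, ?_⟩ hab hba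
  · rintro rfl
    exact hab dvd_rfl
  · exact h.mem_zpowers_mul_of_coprime_s14 hcop
  · rw [h.eq]
    exact h.symm.mem_zpowers_mul_of_coprime_s14 hcop.symm

theorem diffAdj.orderOf_eq_primes {p q : ℕ} (hp : p.Prime) (hq : q.Prime)
    (hG : Monoid.exponent G ∣ p * q) (h : diffAdj a b) :
    (orderOf a = p ∧ orderOf b = q) ∨ (orderOf a = q ∧ orderOf b = p) := by
  have hexp : Monoid.ExponentExists G :=
    Monoid.exponent_ne_zero.mp (ne_zero_of_dvd_ne_zero (mul_ne_zero hp.ne_zero hq.ne_zero) hG)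
  obtain ⟨hab, hba⟩ := h.not_orderOf_dvd (ExponentExists.isMulTorsion hexp)
  exact Nat.eq_and_eq_or_eq_and_eq_of_dvd_mul_of_not_dvd hp hq
    ((Monoid.order_dvd_exponent a).trans hG) ((Monoid.order_dvd_exponent b).trans hG) hab hba

end DiffGraph

namespace Prod

variable {G H : Type*} [Group G] [Group H] {p : ℕ}

theorem orderOf_eq_prime_iff (hp : p.Prime) (hG : Monoid.exponent G ∣ p)
    (hH : p.Coprime (Monoid.exponent H)) (g : G × H) : orderOf g = p ↔ g.1 ≠ 1 ∧ g.2 = 1 := by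
  rw [Prod.orderOf]
  constructor
  · intro h
    have h₂ : orderOf g.2 = 1 :=
      Nat.eq_one_of_dvd_coprimes hH (h ▸ Nat.dvd_lcm_right _ _) (Monoid.order_dvd_exponent _)
    rw [h₂, Nat.lcm_one_right] at h
    refine ⟨fun h₁ => hp.ne_one ?_, orderOf_eq_one_iff.mp h₂⟩
    rw [← h, h₁, orderOf_one]
  · rintro ⟨h₁, h₂⟩
    rw [h₂, orderOf_one, Nat.lcm_one_right]
    exact ((Nat.dvd_prime hp).mp ((Monoid.order_dvd_exponent _).trans hG)).resolve_left
      (mt orderOf_eq_one_iff.mp h₁)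

theorem orderOf_eq_prime_iff' (hp : p.Prime) (hH : Monoid.exponent H ∣ p)
    (hG : p.Coprime (Monoid.exponent G)) (g : G × H) : orderOf g = p ↔ g.1 = 1 ∧ g.2 ≠ 1 := by
  rw [← (MulEquiv.prodComm (M := G) (N := H)).orderOf_eq g, orderOf_eq_prime_iff hp hH hG]
  exact and_comm

theorem card_orderOf_eq_prime (hp : p.Prime) (hG : Monoid.exponent G ∣ p)
    (hH : p.Coprime (Monoid.exponent H)) :
    Nat.card {g : G × H // orderOf g = p} = Nat.card G - 1 := by
  have hset : {g : G × H | orderOf g = p} = (fun a => (a, 1)) '' ({1}ᶜ : Set G) := by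
    ext g
    simp [orderOf_eq_prime_iff hp hG hH, Prod.ext_iff, eq_comm]
  change Nat.card {g : G × H | orderOf g = p} = _
  rw [Nat.card_coe_set_eq, hset, Set.ncard_image_of_injective _ (Prod.mk_left_injective 1),
    Set.compl_eq_univ_sdiff, Set.ncard_sdiff_singleton_of_mem (Set.mem_univ 1), Set.ncard_univ]

theorem card_orderOf_eq_prime' (hp : p.Prime) (hH : Monoid.exponent H ∣ p)
    (hG : p.Coprime (Monoid.exponent G)) :
    Nat.card {g : G × H // orderOf g = p} = Nat.card H - 1 := by
  rw [← card_orderOf_eq_prime hp hH hG (H := G)]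
  exact Nat.card_congr <| (MulEquiv.prodComm : G × H ≃* H × G).toEquiv.subtypeEquiv
    fun g => MulEquiv.prodComm.orderOf_eq g ▸ Iff.rfl

theorem diffAdj_iff {q : ℕ} (hp : p.Prime) (hq : q.Prime) (hpq : p ≠ q)
    (hG : Monoid.exponent G = p) (hH : Monoid.exponent H = q) (g h : G × H) :
    diffAdj g h ↔ (orderOf g = p ∧ orderOf h = q) ∨ (orderOf g = q ∧ orderOf h = p) := by
  have hcop : p.Coprime q := (Nat.coprime_primes hp hq).mpr hpq
  have hexp : Monoid.exponent (G × H) ∣ p * q := by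
    rw [Monoid.exponent_prod, hG, hH]
    exact lcm_dvd (dvd_mul_right p q) (dvd_mul_left q p)
  have adj : ∀ x y : G × H, orderOf x = p → orderOf y = q → diffAdj x y := by
    intro x y hx hy
    have hx₂ := ((orderOf_eq_prime_iff hp hG.dvd (hH ▸ hcop) x).mp hx).2
    have hy₁ := ((orderOf_eq_prime_iff' hq hH.dvd (hG ▸ hcop.symm) y).mp hy).1
    have hxy : Commute x y := Prod.ext (by simp [hy₁]) (by simp [hx₂])
    refine hxy.diffAdj (hx ▸ hy ▸ hcop) ?_ ?_ <;> rw [hx, hy]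
    exacts [(Nat.prime_dvd_prime_iff_eq hp hq).not.mpr hpq,
      (Nat.prime_dvd_prime_iff_eq hq hp).not.mpr hpq.symm]
  refine ⟨diffAdj.orderOf_eq_primes hp hq hexp, ?_⟩
  rintro (⟨hg, hh⟩ | ⟨hg, hh⟩)
  exacts [adj g h hg hh, (adj h g hh hg).symm]

end Prod

theorem diffGraph_prod_prime_exponent_complete_bipartite_general
    {P₁ P₂ : Type*} [Group P₁] [Group P₂]
    [Nontrivial P₁] [Nontrivial P₂]
    (p₁ p₂ : ℕ) (hp₁ : p₁.Prime) (hp₂ : p₂.Prime) (hne : p₁ ≠ p₂)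
    (he₁ : Monoid.exponent P₁ = p₁) (he₂ : Monoid.exponent P₂ = p₂) :
    (∀ g : P₁ × P₂, g ≠ 1 →
        ((∃ h : P₁ × P₂, diffAdj g h) ↔ orderOf g = p₁ ∨ orderOf g = p₂)) ∧
      (∀ g h : P₁ × P₂, g ≠ 1 → h ≠ 1 →
        (diffAdj g h ↔
          (orderOf g = p₁ ∧ orderOf h = p₂) ∨ (orderOf g = p₂ ∧ orderOf h = p₁))) ∧
      Nat.card {g : P₁ × P₂ // orderOf g = p₁} = Nat.card P₁ - 1 ∧
      Nat.card {g : P₁ × P₂ // orderOf g = p₂} = Nat.card P₂ - 1 := by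
  have hcop : p₁.Coprime p₂ := (Nat.coprime_primes hp₁ hp₂).mpr hne
  have adj := Prod.diffAdj_iff hp₁ hp₂ hne he₁ he₂
  refine ⟨fun g _ => ⟨fun ⟨h, hgh⟩ => ((adj g h).mp hgh).imp And.left And.left, ?_⟩,
    fun g h _ _ => adj g h, Prod.card_orderOf_eq_prime hp₁ he₁.dvd (he₂ ▸ hcop),
    Prod.card_orderOf_eq_prime' hp₂ he₂.dvd (he₁ ▸ hcop.symm)⟩
  rintro (hg | hg)
  · obtain ⟨b, hb⟩ := exists_ne (1 : P₂)
    refine ⟨(1, b), (adj _ _).mpr (.inl ⟨hg, ?_⟩)⟩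
    exact (Prod.orderOf_eq_prime_iff' hp₂ he₂.dvd (he₁ ▸ hcop.symm) _).mpr ⟨rfl, hb⟩
  · obtain ⟨a, ha⟩ := exists_ne (1 : P₁)
    refine ⟨(a, 1), (adj _ _).mpr (.inr ⟨hg, ?_⟩)⟩
    exact (Prod.orderOf_eq_prime_iff hp₁ he₁.dvd (he₂ ▸ hcop) _).mpr ⟨ha, rfl⟩

/-- Let p₁ ≠ p₂ be primes and let G = P₁ × P₂, where P_i is a
non-trivial finite p_i-group of exponent p_i for i = 1, 2. Then a non-identity
element of G is a non-isolated vertex of P_E(G) − P(G) if and only if its order is p₁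
or p₂, and two such vertices are adjacent in D(G) if and only if one has order p₁ and
the other has order p₂; consequently the difference graph D(G) is the complete
bipartite graph K_{|P₁|−1, |P₂|−1} (the two parts having |P₁|−1 and |P₂|−1
elements). -/
theorem diffGraph_prod_prime_exponent_complete_bipartite
    {P₁ P₂ : Type*} [Group P₁] [Group P₂] [Finite P₁] [Finite P₂]
    [Nontrivial P₁] [Nontrivial P₂]
    (p₁ p₂ : ℕ) (hp₁ : p₁.Prime) (hp₂ : p₂.Prime) (hne : p₁ ≠ p₂)
    (h₁ : IsPGroup p₁ P₁) (h₂ : IsPGroup p₂ P₂)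
    (he₁ : Monoid.exponent P₁ = p₁) (he₂ : Monoid.exponent P₂ = p₂) :
    (∀ g : P₁ × P₂, g ≠ 1 →
        ((∃ h : P₁ × P₂, diffAdj g h) ↔ orderOf g = p₁ ∨ orderOf g = p₂)) ∧
      (∀ g h : P₁ × P₂, g ≠ 1 → h ≠ 1 →
        (diffAdj g h ↔
          (orderOf g = p₁ ∧ orderOf h = p₂) ∨ (orderOf g = p₂ ∧ orderOf h = p₁))) ∧
      Nat.card {g : P₁ × P₂ // orderOf g = p₁} = Nat.card P₁ - 1 ∧
      Nat.card {g : P₁ × P₂ // orderOf g = p₂} = Nat.card P₂ - 1 :=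
  diffGraph_prod_prime_exponent_complete_bipartite_general p₁ p₂ hp₁ hp₂ hne he₁ he₂
end

section
/- Let G be a finite nilpotent group whose order is divisible by at least three distinct primes. Then the difference graph D(G) contains a complete bipartite subgraph K_{4,6}: there exist disjoint subsets A, B ⊆ G with |A| = 4 and |B| = 6 such that every element of A is adjacent in D(G) to every element of B. -/
private lemma exists_three_lt {S : Finset ℕ} (h : 3 ≤ S.card) :
    ∃ p q r, p ∈ S ∧ q ∈ S ∧ r ∈ S ∧ p < q ∧ q < r := by
  obtain ⟨T, hTS, hT⟩ := Finset.exists_subset_card_eq h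
  obtain ⟨a, b, c, hab, hac, hbc, rfl⟩ := Finset.card_eq_three.mp hT
  have ha : a ∈ S := hTS (by simp)
  have hb : b ∈ S := hTS (by simp)
  have hc : c ∈ S := hTS (by simp)
  rcases hab.lt_or_gt with h1 | h1 <;> rcases hac.lt_or_gt with h2 | h2 <;>
    rcases hbc.lt_or_gt with h3 | h3
  · exact ⟨a, b, c, ha, hb, hc, h1, h3⟩
  · exact ⟨a, c, b, ha, hc, hb, h2, h3⟩
  · omega
  · exact ⟨c, a, b, hc, ha, hb, h2, h1⟩
  · exact ⟨b, a, c, hb, ha, hc, h1, h2⟩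
  · omega
  · exact ⟨b, c, a, hb, hc, ha, h3, h2⟩
  · exact ⟨c, b, a, hc, hb, ha, h3, h1⟩

open Subgroup in
private lemma commute_of_prime_orders {G : Type*} [Group G] [Finite G]
    (hnil : Group.IsNilpotent G) {p q : ℕ} (hp : p.Prime) (hq : q.Prime) (hne : p ≠ q)
    {x y : G} (hx : orderOf x = p) (hy : orderOf y = q) : Commute x y := by
  haveI := Fact.mk hp
  haveI := Fact.mk hq
  have hxP : IsPGroup p (zpowers x) :=
    IsPGroup.of_card (((Nat.card_zpowers x).trans hx).trans (pow_one p).symm)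
  have hyQ : IsPGroup q (zpowers y) :=
    IsPGroup.of_card (((Nat.card_zpowers y).trans hy).trans (pow_one q).symm)
  obtain ⟨P, hP⟩ := hxP.exists_le_sylow
  obtain ⟨Q, hQ⟩ := hyQ.exists_le_sylow
  have hnorm := ((isNilpotent_of_finite_tfae (G := G)).out 0 3).mp hnil
  exact Subgroup.commute_of_normal_of_disjoint _ _ (hnorm p (Fact.mk hp) P)
    (hnorm q (Fact.mk hq) Q)
    (IsPGroup.disjoint_of_ne p q hne _ _ P.2 Q.2) x y (hP (mem_zpowers x)) (hQ (mem_zpowers y))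

/-- Let G be a finite nilpotent group whose order is divisible by at
least three distinct primes. Then the difference graph D(G) contains a complete
bipartite subgraph K_{4,6}: there exist disjoint subsets A, B ⊆ G with |A| = 4 and
|B| = 6 such that every element of A is adjacent in D(G) to every element of B. -/
theorem nilpotent_three_primes_K46 {G : Type*} [Group G] [Finite G]
    (hnil : Group.IsNilpotent G)
    (h3 : 3 ≤ (Nat.card G).primeFactors.card) :
    ∃ A B : Finset G, A.card = 4 ∧ B.card = 6 ∧ Disjoint A B ∧
      ∀ a ∈ A, ∀ b ∈ B, diffAdj a b := by
  classical
  obtain ⟨p, q, r, hpmem, hqmem, hrmem, hpq, hqr⟩ := exists_three_lt h3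
  obtain ⟨hp, hpd, -⟩ := Nat.mem_primeFactors.mp hpmem
  obtain ⟨hq, hqd, -⟩ := Nat.mem_primeFactors.mp hqmem
  obtain ⟨hr, hrd, -⟩ := Nat.mem_primeFactors.mp hrmem
  haveI := Fact.mk hp; haveI := Fact.mk hq; haveI := Fact.mk hr
  obtain ⟨x, hx⟩ := exists_prime_orderOf_dvd_card' p hpd
  obtain ⟨y, hy⟩ := exists_prime_orderOf_dvd_card' q hqd
  obtain ⟨z, hz⟩ := exists_prime_orderOf_dvd_card' r hrd
  have hpr : p < r := hpq.trans hqr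
  have cxy := commute_of_prime_orders hnil hp hq hpq.ne hx hy
  have cxz := commute_of_prime_orders hnil hp hr hpr.ne hx hz
  have cyz := commute_of_prime_orders hnil hq hr hqr.ne hy hz
  have cop_pq : Nat.Coprime p q := (Nat.coprime_primes hp hq).mpr hpq.ne
  have cop_pr : Nat.Coprime p r := (Nat.coprime_primes hp hr).mpr hpr.ne
  have cop_qr : Nat.Coprime q r := (Nat.coprime_primes hq hr).mpr hqr.ne
  -- the element g of order p*q*r
  set g : G := x * (y * z) with hgdef
  have hyz : orderOf (y * z) = q * r := by
    rw [cyz.orderOf_mul_eq_mul_orderOf_of_coprime (by rw [hy, hz]; exact cop_qr), hy, hz]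
  have hg : orderOf g = p * (q * r) := by
    rw [(cxy.mul_right cxz).orderOf_mul_eq_mul_orderOf_of_coprime
      (by rw [hx, hyz]; exact cop_pq.mul_right cop_pr), hx, hyz]
  have hppos := hp.pos
  have hqpos := hq.pos
  have hrpos := hr.pos
  -- elements of orders p*r and q*r
  have hh : orderOf (g ^ q) = p * r := by
    rw [orderOf_pow, hg]
    have h1 : Nat.gcd (p * (q * r)) q = q :=
      Nat.gcd_eq_right ⟨p * r, by ring⟩
    rw [h1]
    have h2 : p * (q * r) = p * r * q := by ring
    rw [h2, Nat.mul_div_cancel _ hqpos]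
  have hk : orderOf (g ^ p) = q * r := by
    rw [orderOf_pow, hg]
    have h1 : Nat.gcd (p * (q * r)) p = p :=
      Nat.gcd_eq_right ⟨q * r, by ring⟩
    rw [h1]
    rw [Nat.mul_div_cancel_left _ hppos]
  -- bounds on primes
  have hp2 : 2 ≤ p := hp.two_le
  have hq3 : 3 ≤ q := by omega
  have hr5 : 5 ≤ r := by
    have h4 : r ≠ 4 := by rintro rfl; norm_num at hr
    omega
  -- exponent sets
  have hcardA : 4 ≤ ((Finset.range (p * r)).filter (p * r).Coprime).card := by
    have e : ((Finset.range (p * r)).filter (p * r).Coprime).card = (p * r).totient := rfl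
    rw [e, Nat.totient_mul cop_pr, Nat.totient_prime hp, Nat.totient_prime hr]
    calc 4 = 1 * 4 := rfl
    _ ≤ (p - 1) * (r - 1) := Nat.mul_le_mul (by omega) (by omega)
  have hcardB : 6 ≤ ((Finset.range (q * r)).filter (q * r).Coprime).card := by
    have e : ((Finset.range (q * r)).filter (q * r).Coprime).card = (q * r).totient := rfl
    rw [e, Nat.totient_mul cop_qr, Nat.totient_prime hq, Nat.totient_prime hr]
    calc 6 ≤ 2 * 4 := by norm_num
    _ ≤ (q - 1) * (r - 1) := Nat.mul_le_mul (by omega) (by omega)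
  obtain ⟨S4, hS4sub, hS4card⟩ := Finset.exists_subset_card_eq hcardA
  obtain ⟨S6, hS6sub, hS6card⟩ := Finset.exists_subset_card_eq hcardB
  refine ⟨S4.image fun u => (g ^ q) ^ u, S6.image fun u => (g ^ p) ^ u, ?_, ?_, ?_, ?_⟩
  · rw [Finset.card_image_of_injOn, hS4card]
    intro u hu v hv huv
    have hu' := Finset.mem_filter.mp (hS4sub hu)
    have hv' := Finset.mem_filter.mp (hS4sub hv)
    exact pow_injOn_Iio_orderOf (by simpa [hh] using Finset.mem_range.mp hu'.1)
      (by simpa [hh] using Finset.mem_range.mp hv'.1) huv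
  · rw [Finset.card_image_of_injOn, hS6card]
    intro u hu v hv huv
    have hu' := Finset.mem_filter.mp (hS6sub hu)
    have hv' := Finset.mem_filter.mp (hS6sub hv)
    exact pow_injOn_Iio_orderOf (by simpa [hk] using Finset.mem_range.mp hu'.1)
      (by simpa [hk] using Finset.mem_range.mp hv'.1) huv
  · -- disjoint
    rw [Finset.disjoint_left]
    rintro a ha hb
    obtain ⟨u, hu, rfl⟩ := Finset.mem_image.mp ha
    obtain ⟨v, hv, hvb⟩ := Finset.mem_image.mp hb
    have hu' := Finset.mem_filter.mp (hS4sub hu)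
    have hv' := Finset.mem_filter.mp (hS6sub hv)
    have oa : orderOf ((g ^ q) ^ u) = p * r := by
      rw [orderOf_pow, hh, hu'.2, Nat.div_one]
    have ob : orderOf ((g ^ p) ^ v) = q * r := by
      rw [orderOf_pow, hk, hv'.2, Nat.div_one]
    rw [hvb, oa] at ob
    have : p = q := Nat.eq_of_mul_eq_mul_right hrpos ob
    omega
  · -- adjacency
    intro a ha b hb
    obtain ⟨u, hu, rfl⟩ := Finset.mem_image.mp ha
    obtain ⟨v, hv, rfl⟩ := Finset.mem_image.mp hb
    have hu' := Finset.mem_filter.mp (hS4sub hu)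
    have hv' := Finset.mem_filter.mp (hS6sub hv)
    have oa : orderOf ((g ^ q) ^ u) = p * r := by
      rw [orderOf_pow, hh, hu'.2, Nat.div_one]
    have ob : orderOf ((g ^ p) ^ v) = q * r := by
      rw [orderOf_pow, hk, hv'.2, Nat.div_one]
    have hne : (g ^ q) ^ u ≠ (g ^ p) ^ v := by
      intro h
      rw [h, ob] at oa
      have : p = q := Nat.eq_of_mul_eq_mul_right hrpos oa.symm
      omega
    refine ⟨⟨hne, g, ?_, ?_⟩, ?_⟩
    · exact Subgroup.pow_mem _ (Subgroup.pow_mem _ (Subgroup.mem_zpowers g) q) u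
    · exact Subgroup.pow_mem _ (Subgroup.pow_mem _ (Subgroup.mem_zpowers g) p) v
    · rintro ⟨-, hmem | hmem⟩
      · have hdvd := orderOf_dvd_of_mem_zpowers hmem
        rw [oa, ob] at hdvd
        have hpdvd : p ∣ q * r := (dvd_mul_right p r).trans hdvd
        rcases (Nat.Prime.dvd_mul hp).mp hpdvd with h' | h'
        · exact hpq.ne ((Nat.prime_dvd_prime_iff_eq hp hq).mp h')
        · exact hpr.ne ((Nat.prime_dvd_prime_iff_eq hp hr).mp h')
      · have hdvd := orderOf_dvd_of_mem_zpowers hmem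
        rw [oa, ob] at hdvd
        have hqdvd : q ∣ p * r := (dvd_mul_right q r).trans hdvd
        rcases (Nat.Prime.dvd_mul hq).mp hqdvd with h' | h'
        · exact hpq.ne' ((Nat.prime_dvd_prime_iff_eq hq hp).mp h')
        · exact hqr.ne ((Nat.prime_dvd_prime_iff_eq hq hr).mp h')
end

section
/- Let G = Z₂ × Z₂ × Z₉. Then G has exactly three maximal cyclic subgroups, each of order 18, and all six elements of order 9 of G lie in each of them; moreover, every element of order 9 of G is adjacent in the difference graph D(G) to every element of order 2 or 6, so that D(G) contains a complete bipartite subgraph isomorphic to K_{6,9}. -/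
/-- The group Z₂ × Z₂ × Z₉, written multiplicatively. -/
abbrev G229 := Multiplicative (ZMod 2 × ZMod 2 × ZMod 9)

/- ### Auxiliary material -/

/-- The three generators of the maximal cyclic subgroups. -/
def gens : Fin 3 → G229
| 0 => Multiplicative.ofAdd (1,0,1)
| 1 => Multiplicative.ofAdd (0,1,1)
| 2 => Multiplicative.ofAdd (1,1,1)

lemma gens_pow : ∀ i : Fin 3, (gens i)^18 = 1 ∧ (gens i)^9 ≠ 1 ∧ (gens i)^6 ≠ 1 := by decide

lemma pow18 : ∀ g : G229, g ^ 18 = 1 := by decide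

lemma cover : ∀ g : G229, ∃ i : Fin 3, ∃ n : Fin 18, (gens i)^(n:ℕ) = g := by decide

lemma cover9 : ∀ g : G229, g^9 = 1 ∧ g^3 ≠ 1 → ∀ i : Fin 3, ∃ n : Fin 18, (gens i)^(n:ℕ) = g := by
  decide

lemma nopow : ∀ i j : Fin 3, i ≠ j → ¬ ∃ n : Fin 18, (gens j)^(n:ℕ) = gens i := by decide

lemma card9 : Fintype.card {g : G229 // g^9 = 1 ∧ g^3 ≠ 1} = 6 := by decide

lemma card26 : Fintype.card {g : G229 // (g^2 = 1 ∧ g ≠ 1) ∨ (g^6 = 1 ∧ g^2 ≠ 1 ∧ g^3 ≠ 1)} = 9 := by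
  decide

lemma isCyclic_zpowers {G : Type*} [Group G] (g : G) : IsCyclic (Subgroup.zpowers g) := by
  refine ⟨⟨g, Subgroup.mem_zpowers g⟩, fun x => ?_⟩
  obtain ⟨k, hk⟩ := Subgroup.mem_zpowers_iff.mp x.2
  exact ⟨k, Subtype.ext (by simpa using hk)⟩

lemma orderOf18 {g : G229} (h2 : g^9 ≠ 1) (h3 : g^6 ≠ 1) : orderOf g = 18 := by
  have hd : orderOf g ∣ 18 := orderOf_dvd_of_pow_eq_one (pow18 g)
  have h9 : ¬ orderOf g ∣ 9 := fun h => h2 (orderOf_dvd_iff_pow_eq_one.mp h)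
  have h6 : ¬ orderOf g ∣ 6 := fun h => h3 (orderOf_dvd_iff_pow_eq_one.mp h)
  have hle := Nat.le_of_dvd (by norm_num) hd
  have hpos : 0 < orderOf g := orderOf_pos g
  interval_cases h : orderOf g <;> first | rfl | (exfalso; revert hd h9 h6; decide)

lemma ord9_iff (g : G229) : orderOf g = 9 ↔ (g^9 = 1 ∧ g^3 ≠ 1) := by
  constructor
  · intro h
    refine ⟨orderOf_dvd_iff_pow_eq_one.mp (by rw [h]), fun h3 => ?_⟩
    have := orderOf_dvd_of_pow_eq_one h3
    rw [h] at this
    revert this; decide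
  · rintro ⟨h9, h3⟩
    have hd : orderOf g ∣ 9 := orderOf_dvd_of_pow_eq_one h9
    have h3' : ¬ orderOf g ∣ 3 := fun h => h3 (orderOf_dvd_iff_pow_eq_one.mp h)
    have hle := Nat.le_of_dvd (by norm_num) hd
    have hpos : 0 < orderOf g := orderOf_pos g
    interval_cases h : orderOf g <;> first | rfl | (exfalso; revert hd h3'; decide)

lemma ord26_iff (g : G229) :
    (orderOf g = 2 ∨ orderOf g = 6) ↔ ((g^2 = 1 ∧ g ≠ 1) ∨ (g^6 = 1 ∧ g^2 ≠ 1 ∧ g^3 ≠ 1)) := by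
  constructor
  · rintro (h | h)
    · refine Or.inl ⟨orderOf_dvd_iff_pow_eq_one.mp (by rw [h]), fun h1 => by simp [h1] at h⟩
    · refine Or.inr ⟨orderOf_dvd_iff_pow_eq_one.mp (by rw [h]), fun h2 => ?_, fun h3 => ?_⟩
      · have := orderOf_dvd_of_pow_eq_one h2; rw [h] at this; revert this; decide
      · have := orderOf_dvd_of_pow_eq_one h3; rw [h] at this; revert this; decide
  · rintro (⟨h2, h1⟩ | ⟨h6, h2, h3⟩)
    · have hd : orderOf g ∣ 2 := orderOf_dvd_of_pow_eq_one h2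
      have h1' : orderOf g ≠ 1 := fun h => h1 (orderOf_eq_one_iff.mp h)
      have hle := Nat.le_of_dvd (by norm_num) hd
      have hpos : 0 < orderOf g := orderOf_pos g
      interval_cases h : orderOf g <;> simp_all
    · have hd : orderOf g ∣ 6 := orderOf_dvd_of_pow_eq_one h6
      have h2' : ¬ orderOf g ∣ 2 := fun h => h2 (orderOf_dvd_iff_pow_eq_one.mp h)
      have h3' : ¬ orderOf g ∣ 3 := fun h => h3 (orderOf_dvd_iff_pow_eq_one.mp h)
      have hle := Nat.le_of_dvd (by norm_num) hd
      have hpos : 0 < orderOf g := orderOf_pos g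
      interval_cases h : orderOf g <;>
        first | (right; rfl) | (exfalso; revert hd h2' h3'; decide)

lemma mem_zpowers_fin {h g : G229} (hg : g ∈ Subgroup.zpowers h) :
    ∃ n : Fin 18, h ^ (n:ℕ) = g := by
  obtain ⟨k, hk⟩ := Subgroup.mem_zpowers_iff.mp hg
  have h18 : h ^ (18:ℤ) = 1 := by
    rw [show (18:ℤ) = ((18:ℕ):ℤ) from rfl, zpow_natCast]; exact pow18 h
  have hnn : 0 ≤ k % 18 := Int.emod_nonneg k (by norm_num)
  have hlt : k % 18 < 18 := Int.emod_lt_of_pos k (by norm_num)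
  refine ⟨⟨(k % 18).toNat, by omega⟩, ?_⟩
  have hkk : h ^ (k % 18) = h ^ k := by
    conv_rhs => rw [show k = 18 * (k / 18) + k % 18 from (Int.mul_ediv_add_emod k 18).symm]
    rw [zpow_add, zpow_mul, h18, one_zpow, one_mul]
  simp only [Fin.val_mk]
  rw [← zpow_natCast, Int.toNat_of_nonneg hnn, hkk, hk]

lemma mem_zpowers_of_fin {h g : G229} {n : Fin 18} (hn : h ^ (n:ℕ) = g) :
    g ∈ Subgroup.zpowers h :=
  Subgroup.mem_zpowers_iff.mpr ⟨(n:ℕ), by rw [zpow_natCast]; exact hn⟩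

/-- The three maximal cyclic subgroups. -/
def M (i : Fin 3) : Subgroup G229 := Subgroup.zpowers (gens i)

lemma orderOf_gens (i : Fin 3) : orderOf (gens i) = 18 :=
  orderOf18 (gens_pow i).2.1 (gens_pow i).2.2

lemma cardM (i : Fin 3) : Nat.card (M i) = 18 := by
  rw [M, Nat.card_zpowers, orderOf_gens]

lemma sub_eq_of_le_card {H K : Subgroup G229} (hle : H ≤ K) (hc : Nat.card K ≤ Nat.card H) :
    H = K := by
  have hs : (H : Set G229) ⊆ (K : Set G229) := hle
  have := Set.eq_of_subset_of_ncard_le hs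
    (by rwa [← Nat.card_coe_set_eq, ← Nat.card_coe_set_eq]) (Set.toFinite _)
  exact SetLike.coe_injective this

lemma cyclic_eq_zpowers {H : Subgroup G229} (hH : IsCyclic H) :
    ∃ h : G229, H = Subgroup.zpowers h := by
  obtain ⟨⟨h, hh⟩, hgen⟩ := hH.exists_generator
  refine ⟨h, le_antisymm ?_ ((Subgroup.zpowers_le).mpr hh)⟩
  intro x hx
  obtain ⟨k, hk⟩ := Subgroup.mem_zpowers_iff.mp (hgen ⟨x, hx⟩)
  exact Subgroup.mem_zpowers_iff.mpr ⟨k, by simpa using congrArg Subtype.val hk⟩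

lemma M_maxCyclic (i : Fin 3) : IsMaximalCyclic (M i) := by
  refine ⟨isCyclic_zpowers _, fun K hK hle => ?_⟩
  obtain ⟨k, rfl⟩ := cyclic_eq_zpowers hK
  refine sub_eq_of_le_card hle ?_
  rw [Nat.card_zpowers, cardM]
  exact Nat.le_of_dvd (by norm_num) (orderOf_dvd_of_pow_eq_one (pow18 k))

lemma classify (H : Subgroup G229) : IsMaximalCyclic H ↔ (H = M 0 ∨ H = M 1 ∨ H = M 2) := by
  constructor
  · rintro ⟨hc, hmax⟩
    obtain ⟨h, rfl⟩ := cyclic_eq_zpowers hc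
    obtain ⟨i, n, hn⟩ := cover h
    have hle : Subgroup.zpowers h ≤ M i :=
      (Subgroup.zpowers_le).mpr (mem_zpowers_of_fin hn)
    have := hmax (M i) (isCyclic_zpowers _) hle
    fin_cases i <;> tauto
  · rintro (rfl | rfl | rfl) <;> exact M_maxCyclic _

lemma M_ne : ∀ i j : Fin 3, i ≠ j → M i ≠ M j := by
  intro i j hij heq
  have h1 : gens i ∈ M i := Subgroup.mem_zpowers _
  rw [heq] at h1
  exact nopow i j hij (mem_zpowers_fin (show gens i ∈ Subgroup.zpowers (gens j) from h1))

/-- Let G = Z₂ × Z₂ × Z₉. Then G has exactly three maximal cyclic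
subgroups, each of order 18, and all six elements of order 9 of G lie in each of
them; moreover, every element of order 9 of G is adjacent in the difference graph
D(G) to every element of order 2 or 6, so that D(G) contains a complete bipartite
subgraph isomorphic to K_{6,9}. -/
theorem zmod2_zmod2_zmod9_diffGraph :
    Nat.card {H : Subgroup G229 // IsMaximalCyclic H} = 3 ∧
      (∀ H : Subgroup G229, IsMaximalCyclic H → Nat.card H = 18) ∧
      Nat.card {g : G229 // orderOf g = 9} = 6 ∧
      (∀ g : G229, orderOf g = 9 → ∀ H : Subgroup G229, IsMaximalCyclic H → g ∈ H) ∧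
      (∀ x y : G229, orderOf x = 9 → (orderOf y = 2 ∨ orderOf y = 6) → diffAdj x y) ∧
      Nat.card {g : G229 // orderOf g = 2 ∨ orderOf g = 6} = 9 := by
  refine ⟨?_, ?_, ?_, ?_, ?_, ?_⟩
  · -- exactly three maximal cyclic subgroups
    have e1 : Nat.card {H : Subgroup G229 // IsMaximalCyclic H}
        = Nat.card ({M 0, M 1, M 2} : Set (Subgroup G229)) :=
      Nat.card_congr (Equiv.subtypeEquivRight fun H => by
        simpa [Set.mem_insert_iff] using classify H)
    rw [e1, Nat.card_coe_set_eq]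
    exact Set.ncard_eq_three.mpr
      ⟨M 0, M 1, M 2, M_ne 0 1 (by decide), M_ne 0 2 (by decide), M_ne 1 2 (by decide), rfl⟩
  · -- each of order 18
    intro H hH
    rcases (classify H).mp hH with rfl | rfl | rfl <;> exact cardM _
  · -- six elements of order 9
    have e1 : Nat.card {g : G229 // orderOf g = 9}
        = Nat.card {g : G229 // g^9 = 1 ∧ g^3 ≠ 1} :=
      Nat.card_congr (Equiv.subtypeEquivRight fun g => ord9_iff g)
    rw [e1, Nat.card_eq_fintype_card, card9]
  · -- all of them lie in each maximal cyclic subgroup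
    intro g hg H hH
    rcases (classify H).mp hH with rfl | rfl | rfl <;>
      · obtain ⟨n, hn⟩ := cover9 g ((ord9_iff g).mp hg) _
        exact mem_zpowers_of_fin hn
  · -- adjacency in the difference graph
    intro x y hx hy
    have hxy : x ≠ y := fun h => by rcases hy with hy | hy <;> rw [h, hy] at hx <;> norm_num at hx
    obtain ⟨i, n, hn⟩ := cover y
    obtain ⟨m, hm⟩ := cover9 x ((ord9_iff x).mp hx) i
    refine ⟨⟨hxy, gens i, mem_zpowers_of_fin hm, mem_zpowers_of_fin hn⟩, ?_⟩
    rintro ⟨-, hmem | hmem⟩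
    · have := orderOf_dvd_of_mem_zpowers hmem
      rw [hx] at this
      rcases hy with hy | hy <;> rw [hy] at this <;> revert this <;> decide
    · have := orderOf_dvd_of_mem_zpowers hmem
      rw [hx] at this
      rcases hy with hy | hy <;> rw [hy] at this <;> revert this <;> decide
  · -- nine elements of order 2 or 6
    have e1 : Nat.card {g : G229 // orderOf g = 2 ∨ orderOf g = 6}
        = Nat.card {g : G229 // (g^2 = 1 ∧ g ≠ 1) ∨ (g^6 = 1 ∧ g^2 ≠ 1 ∧ g^3 ≠ 1)} :=
      Nat.card_congr (Equiv.subtypeEquivRight fun g => ord26_iff g)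
    rw [e1, Nat.card_eq_fintype_card, card26]
end

section
/- Let P be a finite 2-group of exponent 4 containing two maximal cyclic subgroups H and K of order 4 with |H ∩ K| = 2, and let G = P × Z₃. Let S be the set of the four elements (h, e) of G with h an element of order 4 of H ∪ K, and let T be the set of the four elements (a, t) of G with a ∈ H ∩ K and t a non-identity element of Z₃. Then every element of S is adjacent in the difference graph D(G) to every element of T, so D(G) contains a complete bipartite subgraph isomorphic to K_{4,4}. -/
section Aux

variable {P : Type*} [Group P]

lemma aux_pow_mod (x : P) {d : ℕ} (hd : x ^ d = 1) (n : ℕ) : x ^ n = x ^ (n % d) := by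
  conv_lhs => rw [← Nat.div_add_mod n d]
  rw [pow_add, pow_mul, hd, one_pow, one_mul]

lemma aux_enum_four {h a : P} (hh : orderOf h = 4) (ha : a ∈ Subgroup.zpowers h) :
    a = 1 ∨ a = h ∨ a = h ^ 2 ∨ a = h ^ 3 := by
  obtain ⟨m, rfl⟩ := Subgroup.mem_zpowers_iff.mp ha
  have key : h ^ m = h ^ (m % 4) := by
    rw [← zpow_mod_orderOf, hh]; norm_num
  have h0 : 0 ≤ m % 4 := Int.emod_nonneg m (by norm_num)
  have h4 : m % 4 < 4 := Int.emod_lt_of_pos m (by norm_num)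
  have hr : m % 4 = ((m % 4).toNat : ℤ) := (Int.toNat_of_nonneg h0).symm
  have hrlt : (m % 4).toNat < 4 := by omega
  rw [key, hr, zpow_natCast]
  interval_cases h' : (m % 4).toNat <;> simp

lemma aux_sq_cases {h a : P} (hh : orderOf h = 4) (ha : a ∈ Subgroup.zpowers h)
    (ha2 : a ^ 2 = 1) : a = 1 ∨ a = h ^ 2 := by
  have h4 : h ^ 4 = 1 := by rw [← hh]; exact pow_orderOf_eq_one h
  have hno2 : h ^ 2 ≠ 1 := by
    intro e
    have := orderOf_dvd_of_pow_eq_one e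
    rw [hh] at this; omega
  rcases aux_enum_four hh ha with rfl | rfl | rfl | rfl
  · exact Or.inl rfl
  · exact absurd ha2 hno2
  · exact Or.inr rfl
  · exfalso
    apply hno2
    have : (h ^ 3) ^ 2 = h ^ 4 * h ^ 2 := by rw [← pow_mul, ← pow_add]
    rw [ha2, h4, one_mul] at this
    exact this.symm

lemma aux_order4_cases {h a : P} (hh : orderOf h = 4) (ha : a ∈ Subgroup.zpowers h)
    (hoa : orderOf a = 4) : a = h ∨ a = h⁻¹ := by
  have h4 : h ^ 4 = 1 := by rw [← hh]; exact pow_orderOf_eq_one h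
  rcases aux_enum_four hh ha with rfl | rfl | rfl | rfl
  · simp at hoa
  · exact Or.inl rfl
  · exfalso
    have : (h ^ 2) ^ 2 = 1 := by rw [← pow_mul]; exact h4
    have := orderOf_dvd_of_pow_eq_one this
    rw [hoa] at this; omega
  · right
    have hm : h ^ 3 * h = 1 := by rw [← pow_succ]; exact h4
    exact eq_inv_of_mul_eq_one_left hm

lemma aux_zpowers_eq [Finite P] {x : P} {L : Subgroup P} (hx : x ∈ L)
    (ho : orderOf x = 4) (hc : Nat.card L = 4) : Subgroup.zpowers x = L := by
  apply Subgroup.eq_of_le_of_card_ge (Subgroup.zpowers_le.mpr hx)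
  rw [Nat.card_zpowers, ho, hc]

lemma aux_exists_gen [Finite P] {L : Subgroup P} (hL : IsCyclic L)
    (hc : Nat.card L = 4) : ∃ h : P, h ∈ L ∧ orderOf h = 4 ∧ Subgroup.zpowers h = L := by
  obtain ⟨g, hg⟩ := @IsCyclic.exists_generator L _ hL
  have htop : Subgroup.zpowers g = ⊤ := by rw [Subgroup.eq_top_iff']; exact hg
  have h1 : orderOf (g : P) = 4 := by
    rw [Subgroup.orderOf_coe, ← Nat.card_zpowers, htop, Subgroup.card_top, hc]
  exact ⟨g, g.2, h1, aux_zpowers_eq g.2 h1 hc⟩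

end Aux

/-- Let P be a finite 2-group of exponent 4 containing two maximal
cyclic subgroups H and K of order 4 with |H ∩ K| = 2, and let G = P × Z₃. Let S be
the set of the four elements (h, e) of G with h an element of order 4 of H ∪ K, and
let T be the set of the four elements (a, t) of G with a ∈ H ∩ K and t a non-identity
element of Z₃. Then every element of S is adjacent in the difference graph D(G) to
every element of T, so D(G) contains a complete bipartite subgraph isomorphic to
K_{4,4}. -/
theorem twoGroup_times_Z3_K44 {P : Type*} [Group P] [Finite P]
    (h2 : IsPGroup 2 P) (hexp : Monoid.exponent P = 4)
    (H K : Subgroup P) (hHK : H ≠ K)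
    (hH : IsMaximalCyclic H) (hK : IsMaximalCyclic K)
    (hHcard : Nat.card H = 4) (hKcard : Nat.card K = 4)
    (hcap : Nat.card (H ⊓ K : Subgroup P) = 2)
    (S T : Set (P × Multiplicative (ZMod 3)))
    (hS : S = {g | orderOf g.1 = 4 ∧ (g.1 ∈ H ∨ g.1 ∈ K) ∧ g.2 = 1})
    (hT : T = {g | g.1 ∈ H ⊓ K ∧ g.2 ≠ 1}) :
    S.ncard = 4 ∧ T.ncard = 4 ∧ ∀ s ∈ S, ∀ t ∈ T, diffAdj s t := by
  obtain ⟨h, hhH, hho, hhz⟩ := aux_exists_gen hH.1 hHcard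
  obtain ⟨k, hkK, hko, hkz⟩ := aux_exists_gen hK.1 hKcard
  have hsub : ∀ x : P, orderOf x = 4 → x ∈ H → x ∉ K := by
    intro x hx hxH hxK
    apply hHK
    have e1 : Subgroup.zpowers x = H := aux_zpowers_eq hxH hx hHcard
    have e2 : H ≤ K := e1 ▸ Subgroup.zpowers_le.mpr hxK
    exact Subgroup.eq_of_le_of_card_ge e2 (by rw [hHcard, hKcard])
  have hne : ∀ x : P, orderOf x = 4 → x ≠ x⁻¹ := by
    intro x hx e
    have hx2 : x ^ 2 = 1 := by
      rw [pow_two]; nth_rewrite 2 [e]; simp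
    have := orderOf_dvd_of_pow_eq_one hx2
    rw [hx] at this; omega
  have capsq : ∀ a ∈ H ⊓ K, a ^ 2 = 1 := by
    intro a ha
    have hd : orderOf a ∣ 2 := by
      rw [← hcap]; exact Subgroup.orderOf_dvd_natCard _ ha
    exact orderOf_dvd_iff_pow_eq_one.mp hd
  have hintr : ∀ a ∈ H ⊓ K, a = 1 ∨ a = h ^ 2 := by
    intro a ha
    exact aux_sq_cases hho (by rw [hhz]; exact (Subgroup.mem_inf.mp ha).1) (capsq a ha)
  have hz2 : h ^ 2 ∈ H ⊓ K := by
    have hnt : Nontrivial (↥(H ⊓ K)) :=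
      Finite.one_lt_card_iff_nontrivial.mp (by rw [hcap]; norm_num)
    obtain ⟨b, hb⟩ := exists_ne (1 : ↥(H ⊓ K))
    have hb1 : (b : P) ≠ 1 := fun e => hb (Subtype.ext (by simp [e]))
    rcases hintr b b.2 with e | e
    · exact absurd e hb1
    · rw [← e]; exact b.2
  have h2ne1 : h ^ 2 ≠ 1 := by
    intro e
    have := orderOf_dvd_of_pow_eq_one e
    rw [hho] at this; omega
  have t3 : ∀ u : Multiplicative (ZMod 3), u ^ 3 = 1 := by decide
  have tenum : ∀ u : Multiplicative (ZMod 3),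
      u = 1 ∨ u = Multiplicative.ofAdd 1 ∨ u = Multiplicative.ofAdd 2 := by decide
  have t1ne : (Multiplicative.ofAdd (1 : ZMod 3)) ≠ 1 := by decide
  have t2ne : (Multiplicative.ofAdd (2 : ZMod 3)) ≠ 1 := by decide
  have t12 : (Multiplicative.ofAdd (1 : ZMod 3)) ≠ Multiplicative.ofAdd (2 : ZMod 3) := by
    decide
  have hinvH : h⁻¹ ∈ H := inv_mem hhH
  have hinvo : orderOf h⁻¹ = 4 := by simpa using hho
  have hkne : h ≠ k := fun e => hsub h hho hhH (e ▸ hkK)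
  have hkine : h ≠ k⁻¹ := fun e => hsub h hho hhH (e ▸ inv_mem hkK)
  have hikne : h⁻¹ ≠ k := fun e => hsub _ hinvo hinvH (e ▸ hkK)
  have hikine : h⁻¹ ≠ k⁻¹ := fun e => hsub _ hinvo hinvH (e ▸ inv_mem hkK)
  have hkinv : k ≠ k⁻¹ := hne k hko
  have hhinv : h ≠ h⁻¹ := hne h hho
  have hSeq : S = {(h, 1), (h⁻¹, 1), (k, 1), (k⁻¹, 1)} := by
    rw [hS]
    ext ⟨x, u⟩
    simp only [Set.mem_setOf_eq, Set.mem_insert_iff, Set.mem_singleton_iff, Prod.mk.injEq]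
    constructor
    · rintro ⟨ho, hx | hx, rfl⟩
      · rcases aux_order4_cases hho (by rw [hhz]; exact hx) ho with rfl | rfl <;> tauto
      · rcases aux_order4_cases hko (by rw [hkz]; exact hx) ho with rfl | rfl <;> tauto
    · rintro (⟨rfl, rfl⟩ | ⟨rfl, rfl⟩ | ⟨rfl, rfl⟩ | ⟨rfl, rfl⟩)
      · exact ⟨hho, Or.inl hhH, rfl⟩
      · exact ⟨hinvo, Or.inl hinvH, rfl⟩
      · exact ⟨hko, Or.inr hkK, rfl⟩
      · exact ⟨by simpa using hko, Or.inr (inv_mem hkK), rfl⟩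
  have hScard : S.ncard = 4 := by
    rw [hSeq]
    rw [Set.ncard_insert_of_notMem (by simp [Prod.ext_iff, hhinv, hkne, hkine]),
        Set.ncard_insert_of_notMem (by simp [Prod.ext_iff, hikne, hikine]),
        Set.ncard_pair (by simp [Prod.ext_iff, hkinv])]
  have hTeq : T = {((1:P), Multiplicative.ofAdd (1 : ZMod 3)),
      ((1:P), Multiplicative.ofAdd (2 : ZMod 3)),
      (h ^ 2, Multiplicative.ofAdd (1 : ZMod 3)),
      (h ^ 2, Multiplicative.ofAdd (2 : ZMod 3))} := by
    rw [hT]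
    ext ⟨a, u⟩
    simp only [Set.mem_setOf_eq, Set.mem_insert_iff, Set.mem_singleton_iff, Prod.mk.injEq]
    constructor
    · rintro ⟨ha, hu⟩
      rcases tenum u with rfl | rfl | rfl
      · exact absurd rfl hu
      · rcases hintr a ha with rfl | rfl
        · exact Or.inl ⟨rfl, rfl⟩
        · exact Or.inr (Or.inr (Or.inl ⟨rfl, rfl⟩))
      · rcases hintr a ha with rfl | rfl
        · exact Or.inr (Or.inl ⟨rfl, rfl⟩)
        · exact Or.inr (Or.inr (Or.inr ⟨rfl, rfl⟩))
    · rintro (⟨rfl, rfl⟩ | ⟨rfl, rfl⟩ | ⟨rfl, rfl⟩ | ⟨rfl, rfl⟩)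
      · exact ⟨one_mem _, t1ne⟩
      · exact ⟨one_mem _, t2ne⟩
      · exact ⟨hz2, t1ne⟩
      · exact ⟨hz2, t2ne⟩
  have hTcard : T.ncard = 4 := by
    rw [hTeq]
    rw [Set.ncard_insert_of_notMem
          (by simp [Prod.ext_iff, t12, Ne.symm h2ne1, t12.symm]),
        Set.ncard_insert_of_notMem
          (by simp [Prod.ext_iff, Ne.symm h2ne1, t12.symm]),
        Set.ncard_pair (by simp [Prod.ext_iff, t12])]
  refine ⟨hScard, hTcard, ?_⟩
  rintro ⟨x, v⟩ hs ⟨a, u⟩ ht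
  rw [hS] at hs; rw [hT] at ht
  obtain ⟨hso, hsm, hs2⟩ := hs
  obtain ⟨htm, htu⟩ := ht
  simp only at hso hsm hs2 htm htu
  subst hs2
  have hax : a ∈ Subgroup.zpowers x := by
    rcases hsm with hx | hx
    · rw [aux_zpowers_eq hx hso hHcard]; exact (Subgroup.mem_inf.mp htm).1
    · rw [aux_zpowers_eq hx hso hKcard]; exact (Subgroup.mem_inf.mp htm).2
  have ha2 : a ^ 2 = 1 := capsq a htm
  have hx4 : x ^ 4 = 1 := by rw [← hso]; exact pow_orderOf_eq_one x
  have hu3 : u ^ 3 = 1 := t3 u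
  have sne : (x, (1 : Multiplicative (ZMod 3))) ≠ (a, u) := by
    intro e
    exact htu ((Prod.mk.injEq _ _ _ _ ▸ e : x = a ∧ (1 : Multiplicative (ZMod 3)) = u)).2.symm
  constructor
  · refine ⟨sne, (x, u), ?_, ?_⟩
    · have hc9 : (x, u) ^ 9 = (x, (1 : Multiplicative (ZMod 3))) := by
        rw [Prod.pow_mk, aux_pow_mod x hx4, aux_pow_mod u hu3]
        norm_num
      exact hc9 ▸ pow_mem (Subgroup.mem_zpowers _) 9
    · rcases aux_sq_cases hso hax ha2 with rfl | rfl
      · have hc4 : (x, u) ^ 4 = ((1 : P), u) := by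
          rw [Prod.pow_mk, hx4, aux_pow_mod u hu3]
          norm_num
        exact hc4 ▸ pow_mem (Subgroup.mem_zpowers _) 4
      · have hc10 : (x, u) ^ 10 = (x ^ 2, u) := by
          rw [Prod.pow_mk, aux_pow_mod x hx4, aux_pow_mod u hu3]
          norm_num
        exact hc10 ▸ pow_mem (Subgroup.mem_zpowers _) 10
  · rintro ⟨-, hmem | hmem⟩
    · obtain ⟨m, hm⟩ := Subgroup.mem_zpowers_iff.mp hmem
      have h1 : a ^ m = x := by
        have := congrArg (MonoidHom.fst P (Multiplicative (ZMod 3))) hm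
        rwa [map_zpow] at this
      have ha2' : a ^ (2 : ℤ) = 1 := by
        rw [show ((2 : ℤ)) = ((2 : ℕ) : ℤ) by norm_num, zpow_natCast]; exact ha2
      have hx2 : x ^ (2 : ℤ) = 1 := by
        calc x ^ (2 : ℤ) = (a ^ m) ^ (2 : ℤ) := by rw [h1]
        _ = a ^ (m * 2) := (zpow_mul a m 2).symm
        _ = (a ^ (2 : ℤ)) ^ m := by rw [mul_comm, zpow_mul]
        _ = 1 := by rw [ha2', one_zpow]
      have hx2' : x ^ (2 : ℕ) = 1 := by
        rw [← zpow_natCast]; exact_mod_cast hx2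
      have := orderOf_dvd_of_pow_eq_one hx2'
      rw [hso] at this; omega
    · obtain ⟨m, hm⟩ := Subgroup.mem_zpowers_iff.mp hmem
      have h1 : (1 : Multiplicative (ZMod 3)) ^ m = u := by
        have := congrArg (MonoidHom.snd P (Multiplicative (ZMod 3))) hm
        rwa [map_zpow] at this
      rw [one_zpow] at h1
      exact htu h1.symm
end
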